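/- arXiv:2201.08774 — 6 statements merged into one kernel-verified Lean document; each statement's English description precedes it below -/
import Mathlib

section
/- In the men-proposing deferred acceptance algorithm, the resulting matching is stable, and moreover it is men-optimal (each man receives his most preferred partner among all stable matchings) and women-pessimal (each woman receives her least preferred partner among all stable matchings). -/
/-- A stable marriage profile: `M m` is man `m`'s ranking of women
(`M m k` = his `k`-th favorite woman), `W w` is woman `w`'s ranking of men. -/
structure Profile (n : ℕ) where
  M : Fin n → (Fin n ≃ Fin n)
  W : Fin n → (Fin n ≃ Fin n)

/-- Man `m` strictly prefers woman `w₁` to woman `w₂`. -/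
def Profile.mpref {n : ℕ} (P : Profile n) (m w₁ w₂ : Fin n) : Prop :=
  (P.M m).symm w₁ < (P.M m).symm w₂

/-- Woman `w` strictly prefers man `m₁` to man `m₂`. -/
def Profile.wpref {n : ℕ} (P : Profile n) (w m₁ m₂ : Fin n) : Prop :=
  (P.W w).symm m₁ < (P.W w).symm m₂

/-- State of the Gale–Shapley (deferred acceptance) algorithm:
`next m` is the rank of the next woman `m` will propose to, `wmatch w` is the man
currently (tentatively) held by woman `w`, `props` records all proposals made so far. -/
structure GSState (n : ℕ) where
  next : Fin n → ℕ
  wmatch : Fin n → Option (Fin n)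
  props : List (Fin n × Fin n)

/-- Man `m` is currently not held by any woman. -/
def isUnmatched {n : ℕ} (s : GSState n) (m : Fin n) : Bool :=
  decide (∀ w, s.wmatch w ≠ some m)

/-- One step of men-proposing deferred acceptance: the first unmatched man
proposes to the next woman on his list; she keeps her favorite proposer so far. -/
def GSstep {n : ℕ} (P : Profile n) (s : GSState n) : GSState n :=
  match (List.finRange n).find? (fun m => isUnmatched s m && decide (s.next m < n)) with
  | none => s
  | some m =>
    if h : s.next m < n then
      let w := P.M m ⟨s.next m, h⟩
      let s' : GSState n :=
        { next := Function.update s.next m (s.next m + 1),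
          wmatch := s.wmatch,
          props := (m, w) :: s.props }
      match s.wmatch w with
      | none => { s' with wmatch := Function.update s.wmatch w (some m) }
      | some m' =>
          if (P.W w).symm m < (P.W w).symm m' then
            { s' with wmatch := Function.update s.wmatch w (some m) }
          else s'
    else s

def GSinit (n : ℕ) : GSState n := ⟨fun _ => 0, fun _ => none, []⟩

/-- Run deferred acceptance to completion (at most `n*n` proposals occur). -/
def GSrun {n : ℕ} (P : Profile n) : GSState n := (GSstep P)^[n * n + 1] (GSinit n)

/-- The men-proposing deferred acceptance matching, as a map from men to women. -/
noncomputable def DA {n : ℕ} (P : Profile n) : Fin n → Fin n :=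
  fun m => if h : ∃ w, (GSrun P).wmatch w = some m then h.choose else m

/-- Man `m` proposes to woman `w` during the run of deferred acceptance on `P`. -/
def Proposes {n : ℕ} (P : Profile n) (m w : Fin n) : Prop :=
  (m, w) ∈ (GSrun P).props

/-- `(m, w)` is a blocking pair for the matching `μ` (men to women) w.r.t. profile `P`. -/
def Blocks {n : ℕ} (P : Profile n) (μ : Fin n → Fin n) (m w : Fin n) : Prop :=
  P.mpref m w (μ m) ∧ ∃ m', μ m' = w ∧ P.wpref w m m'

/-- `μ` is a stable matching with respect to profile `P`. -/
def Stable {n : ℕ} (P : Profile n) (μ : Fin n → Fin n) : Prop :=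
  Function.Bijective μ ∧ ∀ m w, ¬ Blocks P μ m w

/-- Replace man `m`'s preference list by `e`. -/
def Profile.updateM {n : ℕ} (P : Profile n) (m : Fin n) (e : Fin n ≃ Fin n) : Profile n :=
  { P with M := Function.update P.M m e }

/-- Replace woman `w`'s preference list by `e`. -/
def Profile.updateW {n : ℕ} (P : Profile n) (w : Fin n) (e : Fin n ≃ Fin n) : Profile n :=
  { P with W := Function.update P.W w e }

/-- The set of women ranked strictly above `w₀` in the list `e`. -/
def Above {n : ℕ} (e : Fin n ≃ Fin n) (w₀ : Fin n) : Set (Fin n) :=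
  {w | e.symm w < e.symm w₀}

/-- The set of women ranked strictly below `w₀` in the list `e`. -/
def Below {n : ℕ} (e : Fin n ≃ Fin n) (w₀ : Fin n) : Set (Fin n) :=
  {w | e.symm w₀ < e.symm w}

/-- `e'` is obtained from man `m`'s true list by pushing up the set `X` and pushing
down the set `Y` around the pivot `DA P m` (the order of women above and below
the pivot is immaterial, cf. Proposition 2 of the paper). -/
def PushUpDown {n : ℕ} (P : Profile n) (m : Fin n) (X Y : Set (Fin n))
    (e' : Fin n ≃ Fin n) : Prop :=
  Above e' (DA P m) = (Above (P.M m) (DA P m) ∪ X) \ Y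

/-- `e'` is obtained from `m`'s true list by pushing up the set `X` above `DA P m`. -/
def PushUp {n : ℕ} (P : Profile n) (m : Fin n) (X : Set (Fin n))
    (e' : Fin n ≃ Fin n) : Prop :=
  PushUpDown P m X ∅ e'

/-- `e'` is obtained from `m`'s true list by pushing down the set `Y` below `DA P m`. -/
def PushDown {n : ℕ} (P : Profile n) (m : Fin n) (Y : Set (Fin n))
    (e' : Fin n ≃ Fin n) : Prop :=
  PushUpDown P m ∅ Y e'

/-- Woman `w` is ranked below `DA P m` in `m`'s true list, and pushing her up
individually leaves `m`'s deferred acceptance partner unchanged (no regret). -/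
def NoRegretWoman {n : ℕ} (P : Profile n) (m w : Fin n) : Prop :=
  w ∈ Below (P.M m) (DA P m) ∧
    ∀ e' : Fin n ≃ Fin n, PushUp P m {w} e' → DA (P.updateM m e') m = DA P m

/-- The no-regret set `W^NR` of accomplice `m`. -/
def WNR {n : ℕ} (P : Profile n) (m : Fin n) : Set (Fin n) :=
  {w | NoRegretWoman P m w}

namespace DAaux

variable {n : ℕ} (P : Profile n)

lemma unmatched_iff (s : GSState n) (m : Fin n) :
    (isUnmatched s m = true) ↔ ∀ w, s.wmatch w ≠ some m := by
  simp [isUnmatched]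

/-- The proposer-selection predicate. -/
abbrev pick (s : GSState n) : Option (Fin n) :=
  (List.finRange n).find? (fun m => isUnmatched s m && decide (s.next m < n))

lemma pick_spec (s : GSState n) (m : Fin n) (hfind : pick s = some m) :
    (∀ w, s.wmatch w ≠ some m) ∧ s.next m < n := by
  have h := List.find?_some hfind
  simp only [Bool.and_eq_true, decide_eq_true_eq] at h
  exact ⟨(unmatched_iff s m).mp h.1, h.2⟩

lemma step_none (s : GSState n) (hfind : pick s = none) : GSstep P s = s := by
  unfold GSstep
  rw [show ((List.finRange n).find? (fun m => isUnmatched s m && decide (s.next m < n))) = none from hfind]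

lemma step_cases (s : GSState n) (m : Fin n) (hfind : pick s = some m)
    (h : s.next m < n) :
    (GSstep P s).next = Function.update s.next m (s.next m + 1) ∧
    ((s.wmatch (P.M m ⟨s.next m, h⟩) = none ∧
        (GSstep P s).wmatch = Function.update s.wmatch (P.M m ⟨s.next m, h⟩) (some m)) ∨
      (∃ m', s.wmatch (P.M m ⟨s.next m, h⟩) = some m' ∧
        (((P.W (P.M m ⟨s.next m, h⟩)).symm m < (P.W (P.M m ⟨s.next m, h⟩)).symm m' ∧
            (GSstep P s).wmatch = Function.update s.wmatch (P.M m ⟨s.next m, h⟩) (some m)) ∨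
          (¬ (P.W (P.M m ⟨s.next m, h⟩)).symm m < (P.W (P.M m ⟨s.next m, h⟩)).symm m' ∧
            (GSstep P s).wmatch = s.wmatch)))) := by
  unfold GSstep
  rw [show ((List.finRange n).find? (fun m => isUnmatched s m && decide (s.next m < n))) = some m from hfind]
  dsimp only
  rw [dif_pos h]
  rcases hw : s.wmatch (P.M m ⟨s.next m, h⟩) with _ | m'
  · exact ⟨rfl, Or.inl ⟨rfl, rfl⟩⟩
  · dsimp only
    by_cases hlt : (P.W (P.M m ⟨s.next m, h⟩)).symm m < (P.W (P.M m ⟨s.next m, h⟩)).symm m'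
    · rw [if_pos hlt]
      exact ⟨rfl, Or.inr ⟨m', rfl, Or.inl ⟨hlt, rfl⟩⟩⟩
    · rw [if_neg hlt]
      exact ⟨rfl, Or.inr ⟨m', rfl, Or.inr ⟨hlt, rfl⟩⟩⟩


/-- Invariant of the Gale–Shapley run. -/
structure Inv (P : Profile n) (s : GSState n) : Prop where
  nle : ∀ m, s.next m ≤ n
  matched : ∀ w m, s.wmatch w = some m → ∃ hk : s.next m - 1 < n,
      0 < s.next m ∧ w = P.M m ⟨s.next m - 1, hk⟩
  best : ∀ (m : Fin n) (k : ℕ) (hk : k < n), k < s.next m →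
      ∃ m', s.wmatch (P.M m ⟨k, hk⟩) = some m' ∧
        (P.W (P.M m ⟨k, hk⟩)).symm m' ≤ (P.W (P.M m ⟨k, hk⟩)).symm m
  norej : ∀ μ, Stable P μ → ∀ (m : Fin n) (k : ℕ) (hk : k < n), k < s.next m →
      s.wmatch (P.M m ⟨k, hk⟩) ≠ some m → μ m ≠ P.M m ⟨k, hk⟩

lemma inv_init : Inv P (GSinit n) := by
  constructor
  · intro m; exact Nat.zero_le n
  · intro w m h; simp [GSinit] at h
  · intro m k hk hlt; simp [GSinit] at hlt
  · intro μ _ m k hk hlt; simp [GSinit] at hlt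

/-- A man matched to a woman is matched to a unique woman. -/
lemma matched_unique (s : GSState n) (hI : Inv P s) {w w' m : Fin n}
    (h : s.wmatch w = some m) (h' : s.wmatch w' = some m) : w = w' := by
  obtain ⟨hk, _, rfl⟩ := hI.matched w m h
  obtain ⟨hk', _, e'⟩ := hI.matched w' m h'
  exact e'.symm

/-- If `m` is currently unmatched, every woman he ranks below `s.next m` has
rejected him, hence (for stable `μ`) `μ m` is ranked at least `s.next m`. -/
lemma rank_ge_of_unmatched (s : GSState n) (hI : Inv P s) (m : Fin n)
    (hun : ∀ w, s.wmatch w ≠ some m) (μ : Fin n → Fin n) (hμ : Stable P μ) :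
    s.next m ≤ ((P.M m).symm (μ m) : ℕ) := by
  by_contra hcon
  push_neg at hcon
  set k : ℕ := ((P.M m).symm (μ m) : ℕ) with hkdef
  have hk : k < n := ((P.M m).symm (μ m)).isLt
  have hw : P.M m ⟨k, hk⟩ = μ m := by
    have : (⟨k, hk⟩ : Fin n) = (P.M m).symm (μ m) := Fin.ext hkdef
    rw [this]; exact (P.M m).apply_symm_apply (μ m)
  exact hI.norej μ hμ m k hk hcon (by rw [hw]; exact hun (μ m)) hw.symm

/-- If `m` is currently matched to `w`, every stable matching gives him
`w` or someone he likes less. -/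
lemma rank_ge_of_matched (s : GSState n) (hI : Inv P s) (m w : Fin n)
    (hm : s.wmatch w = some m) (μ : Fin n → Fin n) (hμ : Stable P μ)
    (hne : μ m ≠ w) : ((P.M m).symm w : ℕ) < ((P.M m).symm (μ m) : ℕ) := by
  obtain ⟨hk, hpos, hweq⟩ := hI.matched w m hm
  have hrw : ((P.M m).symm w : ℕ) = s.next m - 1 := by
    rw [hweq]; rw [Equiv.symm_apply_apply]
  rw [hrw]
  by_contra hcon
  push_neg at hcon
  set k : ℕ := ((P.M m).symm (μ m) : ℕ) with hkdef
  have hk2 : k < n := ((P.M m).symm (μ m)).isLt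
  have hw2 : P.M m ⟨k, hk2⟩ = μ m := by
    have : (⟨k, hk2⟩ : Fin n) = (P.M m).symm (μ m) := Fin.ext hkdef
    rw [this]; exact (P.M m).apply_symm_apply (μ m)
  have hklt : k < s.next m := lt_of_le_of_lt hcon (Nat.sub_lt hpos Nat.one_pos)
  have hnm : s.wmatch (P.M m ⟨k, hk2⟩) ≠ some m := by
    rw [hw2]
    intro hc
    exact hne (matched_unique P s hI hc hm)
  exact hI.norej μ hμ m k hk2 hklt hnm hw2.symm

lemma inv_step (s : GSState n) (hI : Inv P s) : Inv P (GSstep P s) := by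
  rcases hfind : pick s with _ | m₀
  · rw [step_none P s hfind]; exact hI
  · obtain ⟨hun, h⟩ := pick_spec s m₀ hfind
    obtain ⟨hnext, hcase⟩ := step_cases P s m₀ hfind h
    set w₀ : Fin n := P.M m₀ ⟨s.next m₀, h⟩ with hw₀
    -- facts about next
    have hnextm₀ : (GSstep P s).next m₀ = s.next m₀ + 1 := by
      rw [hnext]; simp [Function.update]
    have hnextne : ∀ m, m ≠ m₀ → (GSstep P s).next m = s.next m := by
      intro m hm; rw [hnext]; simp [Function.update, hm]
    -- the new match at w₀ is m₀ or the old holder; new wmatch agrees off w₀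
    have hoff : ∀ w, w ≠ w₀ → (GSstep P s).wmatch w = s.wmatch w := by
      intro w hw
      rcases hcase with ⟨_, hup⟩ | ⟨m', _, ⟨_, hup⟩ | ⟨_, hup⟩⟩ <;>
        rw [hup] <;> simp [Function.update, hw]
    have hatw₀ : ((GSstep P s).wmatch w₀ = some m₀ ∧
          (∀ m₁, s.wmatch w₀ = some m₁ →
            (P.W w₀).symm m₀ < (P.W w₀).symm m₁)) ∨
        (∃ m₁, s.wmatch w₀ = some m₁ ∧ (GSstep P s).wmatch w₀ = some m₁ ∧
          (P.W w₀).symm m₁ ≤ (P.W w₀).symm m₀) := by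
      rcases hcase with ⟨hnone, hup⟩ | ⟨m', hsome, ⟨hlt, hup⟩ | ⟨hnlt, hup⟩⟩
      · left
        constructor
        · rw [hup]; simp [Function.update]
        · intro m₁ hm₁; rw [hnone] at hm₁; exact absurd hm₁ (by simp)
      · left
        constructor
        · rw [hup]; simp [Function.update]
        · intro m₁ hm₁; rw [hsome] at hm₁
          cases Option.some_injective _ hm₁; exact hlt
      · right
        exact ⟨m', hsome, by rw [hup]; exact hsome, le_of_not_gt hnlt⟩
    constructor
    -- nle
    · intro m
      by_cases hm : m = m₀
      · subst hm; rw [hnextm₀]; omega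
      · rw [hnextne m hm]; exact hI.nle m
    -- matched
    · intro w m hwm
      by_cases hw : w = w₀
      · subst hw
        rcases hatw₀ with ⟨hnew, _⟩ | ⟨m₁, hold, hnew, _⟩
        · rw [hwm] at hnew; cases (Option.some_injective _ hnew)
          refine ⟨by omega, by omega, ?_⟩
          rw [hw₀]; congr 1
          exact Fin.ext (by simp only [Fin.val_mk]; omega)
        · rw [hwm] at hnew; cases (Option.some_injective _ hnew)
          have hm₁ne : m ≠ m₀ := by
            intro hc; subst hc; exact hun w₀ hold
          rw [hnextne m hm₁ne]
          exact hI.matched w₀ m hold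
      · rw [hoff w hw] at hwm
        have hmne : m ≠ m₀ := by
          intro hc; subst hc; exact hun w hwm
        rw [hnextne m hmne]
        exact hI.matched w m hwm
    -- best
    · intro m k hk hklt
      by_cases hm : m = m₀
      · subst hm
        rw [hnextm₀] at hklt
        rcases Nat.lt_succ_iff_lt_or_eq.mp hklt with hklt' | hkeq
        · -- previously proposed
          obtain ⟨m', hm', hle⟩ := hI.best m k hk hklt'
          by_cases hweq : P.M m ⟨k, hk⟩ = w₀
          · exfalso
            have h1 : (⟨k, hk⟩ : Fin n) = ⟨s.next m, h⟩ := (P.M m).injective hweq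
            have h2 : k = s.next m := congrArg Fin.val h1
            omega
          · rw [hoff _ hweq]
            exact ⟨m', hm', hle⟩
        · -- the new proposal
          have hweq : P.M m ⟨k, hk⟩ = w₀ := by
            rw [hw₀]; congr 1; simp only [Fin.mk.injEq]; exact hkeq
          rw [hweq]
          rcases hatw₀ with ⟨hnew, _⟩ | ⟨m₁, _, hnew, hle⟩
          · exact ⟨m, hnew, le_refl _⟩
          · exact ⟨m₁, hnew, hle⟩
      · rw [hnextne m hm] at hklt
        obtain ⟨m', hm', hle⟩ := hI.best m k hk hklt
        by_cases hweq : P.M m ⟨k, hk⟩ = w₀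
        · rw [hweq] at hm' hle ⊢
          rcases hatw₀ with ⟨hnew, hpref⟩ | ⟨m₁, hold, hnew, _⟩
          · exact ⟨m₀, hnew, le_of_lt (lt_of_lt_of_le (hpref m' hm') hle)⟩
          · rw [hold] at hm'
            have e : m₁ = m' := Option.some_injective _ hm'
            rw [← e] at hle
            exact ⟨m₁, hnew, hle⟩
        · rw [hoff _ hweq]
          exact ⟨m', hm', hle⟩
    -- norej
    · intro μ hμ m k hk hklt hnm
      intro hμeq  -- μ m = P.M m ⟨k, hk⟩, derive contradiction
      set w : Fin n := P.M m ⟨k, hk⟩ with hwdef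
      have hμinj : Function.Injective μ := hμ.1.1
      by_cases hweq : w = w₀
      · -- the woman involved is w₀
        by_cases hm : m = m₀
        · subst hm
          rw [hnextm₀] at hklt
          rcases Nat.lt_succ_iff_lt_or_eq.mp hklt with hklt' | hkeq
          · exfalso
            have h1 : (⟨k, hk⟩ : Fin n) = ⟨s.next m, h⟩ := (P.M m).injective (hwdef ▸ hweq)
            have h2 : k = s.next m := congrArg Fin.val h1
            omega
          · -- the fresh proposal to w₀ was rejected: case C
            rcases hatw₀ with ⟨hnew, _⟩ | ⟨m₁, hold, hnew, hle⟩
            · rw [hweq] at hnm; exact hnm hnew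
            · have hm₁ne : m₁ ≠ m := by
                intro hc; subst hc; exact hun w₀ hold
              have hltW : (P.W w₀).symm m₁ < (P.W w₀).symm m :=
                lt_of_le_of_ne hle (fun hc => hm₁ne ((P.W w₀).symm.injective hc))
              have hμm₁ : μ m₁ ≠ w₀ := by
                intro hc
                rw [← hweq] at hc
                exact hm₁ne (hμinj (hc.trans hμeq.symm))
              have hbig : ((P.M m₁).symm w₀ : ℕ) < ((P.M m₁).symm (μ m₁) : ℕ) :=
                rank_ge_of_matched P s hI m₁ w₀ hold μ hμ hμm₁
              refine hμ.2 m₁ w₀ ⟨?_, m, hweq ▸ hμeq, hltW⟩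
              exact hbig
        · -- m ≠ m₀: only way new wmatch w₀ differs for m is m was the old holder
          by_cases hold' : s.wmatch w₀ = some m
          · -- m was displaced by m₀ at w₀ (case B)
            rcases hatw₀ with ⟨hnew, hpref⟩ | ⟨m₁, hold, hnew, _⟩
            · have hltW : (P.W w₀).symm m₀ < (P.W w₀).symm m := hpref m hold'
              -- blocking pair (m₀, w₀) for μ : μ m = w₀
              have hμm₀ : μ m₀ ≠ w₀ := by
                intro hc
                exact hm (hμinj (hμeq.trans (hweq.trans hc.symm)))
              have hbig : s.next m₀ ≤ ((P.M m₀).symm (μ m₀) : ℕ) :=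
                rank_ge_of_unmatched P s hI m₀ hun μ hμ
              have hrk : ((P.M m₀).symm w₀ : ℕ) = s.next m₀ := by
                rw [hw₀, Equiv.symm_apply_apply]
              have hmp : ((P.M m₀).symm w₀ : ℕ) < ((P.M m₀).symm (μ m₀) : ℕ) := by
                rw [hrk]
                exact lt_of_le_of_ne hbig (by
                  intro hc
                  apply hμm₀
                  have : (P.M m₀).symm (μ m₀) = ⟨s.next m₀, h⟩ := Fin.ext hc.symm
                  rw [← (P.M m₀).apply_symm_apply (μ m₀), this, ← hw₀])
              exact hμ.2 m₀ w₀ ⟨hmp, m, hweq ▸ hμeq, hltW⟩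
            · rw [hold] at hold'; cases Option.some_injective _ hold'
              rw [hweq] at hnm; exact hnm hnew
          · -- m wasn't holder before; old norej applies
            have hkltold : k < s.next m := by rw [← hnextne m hm]; exact hklt
            refine hI.norej μ hμ m k hk hkltold ?_ hμeq
            rw [← hwdef, hweq]; exact hold'
      · -- woman ≠ w₀: wmatch unchanged there
        have hmne' : k < s.next m ∧ s.wmatch w ≠ some m := by
          constructor
          · by_cases hm : m = m₀
            · subst hm
              rw [hnextm₀] at hklt
              rcases Nat.lt_succ_iff_lt_or_eq.mp hklt with hklt' | hkeq
              · exact hklt'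
              · exfalso; apply hweq
                rw [hw₀, hwdef]; congr 1; exact Fin.ext hkeq
            · rw [← hnextne m hm]; exact hklt
          · rw [← hoff w hweq]; exact hnm
        exact hI.norej μ hμ m k hk hmne'.1 hmne'.2 hμeq


/-- Potential function: total number of proposals so far. -/
def phi (s : GSState n) : ℕ := ∑ m : Fin n, s.next m

lemma phi_step_of_some (s : GSState n) (m : Fin n) (hfind : pick s = some m) :
    phi (GSstep P s) = phi s + 1 := by
  obtain ⟨_, h⟩ := pick_spec s m hfind
  obtain ⟨hnext, _⟩ := step_cases P s m hfind h
  unfold phi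
  rw [hnext, Finset.sum_update_of_mem (Finset.mem_univ m),
    Finset.sum_eq_add_sum_sdiff_singleton_of_mem (Finset.mem_univ m) s.next]
  omega

lemma phi_le (s : GSState n) (hI : Inv P s) : phi s ≤ n * n := by
  have := Finset.sum_le_card_nsmul Finset.univ s.next n (fun m _ => hI.nle m)
  simpa [phi, mul_comm] using this

lemma run_fix_inv : GSstep P (GSrun P) = GSrun P ∧ Inv P (GSrun P) := by
  have key : ∀ i : ℕ, Inv P ((GSstep P)^[i] (GSinit n)) ∧
      (GSstep P ((GSstep P)^[i] (GSinit n)) = (GSstep P)^[i] (GSinit n) ∨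
        i ≤ phi ((GSstep P)^[i] (GSinit n))) := by
    intro i
    induction i with
    | zero => exact ⟨inv_init P, Or.inr (Nat.zero_le _)⟩
    | succ i ih =>
      obtain ⟨hIi, hcase⟩ := ih
      rw [Function.iterate_succ_apply']
      refine ⟨inv_step P _ hIi, ?_⟩
      rcases hcase with hfix | hle
      · left; rw [hfix]; exact hfix
      · rcases hfind : pick ((GSstep P)^[i] (GSinit n)) with _ | m
        · have hfix := step_none P _ hfind
          left; rw [hfix]; exact hfix
        · right
          rw [phi_step_of_some P _ m hfind]
          omega
  obtain ⟨hI, hc⟩ := key (n * n + 1)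
  rcases hc with hfix | hle
  · exact ⟨hfix, hI⟩
  · exact absurd (le_trans hle (phi_le P _ hI)) (by omega)

lemma run_inv : Inv P (GSrun P) := (run_fix_inv P).2

lemma run_pick_none : pick (GSrun P) = none := by
  rcases hfind : pick (GSrun P) with _ | m
  · rfl
  · exfalso
    have h1 := phi_step_of_some P _ m hfind
    rw [(run_fix_inv P).1] at h1
    omega

lemma run_terminal (m : Fin n) (hun : ∀ w, (GSrun P).wmatch w ≠ some m) :
    (GSrun P).next m = n := by
  have h := List.find?_eq_none.mp (run_pick_none P) m (List.mem_finRange m)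
  simp only [Bool.and_eq_true, decide_eq_true_eq, not_and] at h
  have h2 := h ((unmatched_iff _ m).mpr hun)
  have := (run_inv P).nle m
  omega

lemma all_matched (m : Fin n) : ∃ w, (GSrun P).wmatch w = some m := by
  by_contra hc
  push_neg at hc
  have hn : (GSrun P).next m = n := run_terminal P m hc
  have h1 : ∀ w : Fin n, ∃ m', (GSrun P).wmatch w = some m' := by
    intro w
    have hk : (((P.M m).symm w : ℕ)) < n := ((P.M m).symm w).isLt
    obtain ⟨m', hm', _⟩ := (run_inv P).best m _ hk (by omega)
    refine ⟨m', ?_⟩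
    rw [← hm']
    congr 1
    rw [Fin.eta]
    exact ((P.M m).apply_symm_apply w).symm
  choose f hf using h1
  have finj : Function.Injective f := by
    intro w w' he
    exact matched_unique P _ (run_inv P) (hf w) (he ▸ hf w')
  obtain ⟨w, hw⟩ := (Finite.injective_iff_surjective.mp finj) m
  exact hc w (hw ▸ hf w)

lemma DA_spec (m : Fin n) : (GSrun P).wmatch (DA P m) = some m := by
  have h := all_matched P m
  rw [DA, dif_pos h]
  exact h.choose_spec

lemma DA_eq_of (m w : Fin n) (h : (GSrun P).wmatch w = some m) : DA P m = w :=
  matched_unique P _ (run_inv P) (DA_spec P m) h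

lemma DA_rank (m : Fin n) :
    ((P.M m).symm (DA P m) : ℕ) + 1 = (GSrun P).next m := by
  obtain ⟨hk, hpos, heq⟩ := (run_inv P).matched _ m (DA_spec P m)
  rw [heq, Equiv.symm_apply_apply]
  simp only [Fin.val_mk]
  omega

lemma DA_injective : Function.Injective (DA P) := by
  intro m m' he
  have h1 := DA_spec P m
  have h2 := DA_spec P m'
  rw [← he] at h2
  rw [h1] at h2
  exact (Option.some_injective _ h2.symm).symm

end DAaux

/-- The men-proposing deferred acceptance matching is stable,
men-optimal and women-pessimal. -/
theorem DA_stable_menOptimal_womenPessimal (n : ℕ) (P : Profile n) :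
    Stable P (DA P) ∧
    (∀ μ : Fin n → Fin n, Stable P μ → ∀ m : Fin n,
      (P.M m).symm (DA P m) ≤ (P.M m).symm (μ m)) ∧
    (∀ μ : Fin n → Fin n, Stable P μ → ∀ m m' : Fin n, DA P m = μ m' →
      (P.W (DA P m)).symm m' ≤ (P.W (DA P m)).symm m) := by
  have hstable : Stable P (DA P) := by
    refine ⟨Finite.injective_iff_bijective.mp (DAaux.DA_injective P), ?_⟩
    rintro m w ⟨hpref, m', hm', hwp⟩
    have hk : ((P.M m).symm w : ℕ) < n := ((P.M m).symm w).isLt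
    have hrank := DAaux.DA_rank P m
    have hprefv : ((P.M m).symm w : ℕ) < ((P.M m).symm (DA P m) : ℕ) :=
      Fin.lt_def.mp hpref
    have hlt : ((P.M m).symm w : ℕ) < (GSrun P).next m := by omega
    obtain ⟨m'', hm'', hle⟩ := (DAaux.run_inv P).best m _ hk hlt
    have hMw : P.M m ⟨((P.M m).symm w : ℕ), hk⟩ = w := by
      rw [Fin.eta]; exact (P.M m).apply_symm_apply w
    rw [hMw] at hm'' hle
    have hw' : (GSrun P).wmatch w = some m' := by
      rw [← hm']; exact DAaux.DA_spec P m'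
    rw [hw'] at hm''
    have e : m' = m'' := Option.some_injective _ hm''
    rw [← e] at hle
    exact absurd hwp (not_lt.mpr hle)
  have hopt : ∀ μ : Fin n → Fin n, Stable P μ → ∀ m : Fin n,
      (P.M m).symm (DA P m) ≤ (P.M m).symm (μ m) := by
    intro μ hμ m
    by_cases he : μ m = DA P m
    · rw [he]
    · exact le_of_lt (Fin.lt_def.mpr
        (DAaux.rank_ge_of_matched P _ (DAaux.run_inv P) m (DA P m)
          (DAaux.DA_spec P m) μ hμ he))
  refine ⟨hstable, hopt, ?_⟩
  intro μ hμ m m' he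
  by_contra hcon
  push_neg at hcon
  have hne : m ≠ m' := by
    rintro rfl; exact lt_irrefl _ hcon
  have hμm : μ m ≠ DA P m := by
    intro hc
    exact hne (hμ.1.1 (hc.trans he))
  have hmp : P.mpref m (DA P m) (μ m) := by
    refine lt_of_le_of_ne (hopt μ hμ m) (fun hc => hμm ?_)
    exact ((P.M m).symm.injective hc).symm
  exact hμ.2 m (DA P m) ⟨hmp, m', he.symm, hcon⟩
end

section
/- The deferred acceptance algorithm is non-bossy for women: if a single woman w misreports her preference list and her DA partner is unchanged (μ'(w) = μ(w)), then the entire DA matching is unchanged (μ' = μ). -/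
/-! ### Auxiliary development -/

namespace NonBossy

variable {n : ℕ}

open Function

/-- Case analysis for one GS step. -/
lemma gsstep_cases (P : Profile n) (s : GSState n) :
    (GSstep P s = s ∧ ∀ m : Fin n, isUnmatched s m = true → n ≤ s.next m) ∨
    ∃ (m : Fin n) (h : s.next m < n), isUnmatched s m = true ∧
      (GSstep P s).next = Function.update s.next m (s.next m + 1) ∧
      (GSstep P s).props = (m, P.M m ⟨s.next m, h⟩) :: s.props ∧
      (((GSstep P s).wmatch
            = Function.update s.wmatch (P.M m ⟨s.next m, h⟩) (some m) ∧
          ∀ m', s.wmatch (P.M m ⟨s.next m, h⟩) = some m' →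
            (P.W (P.M m ⟨s.next m, h⟩)).symm m
              < (P.W (P.M m ⟨s.next m, h⟩)).symm m') ∨
        (∃ m', s.wmatch (P.M m ⟨s.next m, h⟩) = some m' ∧
          ¬ (P.W (P.M m ⟨s.next m, h⟩)).symm m
              < (P.W (P.M m ⟨s.next m, h⟩)).symm m' ∧
          (GSstep P s).wmatch = s.wmatch)) := by
  unfold GSstep
  rcases hf : (List.finRange n).find? (fun m => isUnmatched s m && decide (s.next m < n))
    with _ | m
  · left
    refine ⟨rfl, fun m hm => ?_⟩
    by_contra hn
    have hmem : m ∈ List.finRange n := List.mem_finRange m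
    have := List.find?_eq_none.mp hf m hmem
    simp [hm, Nat.lt_of_not_le hn] at this
  · have hp := List.find?_some hf
    simp only [Bool.and_eq_true, decide_eq_true_eq] at hp
    obtain ⟨hum, hlt⟩ := hp
    right
    refine ⟨m, hlt, hum, ?_⟩
    simp only [dif_pos hlt]
    rcases hb : s.wmatch (P.M m ⟨s.next m, hlt⟩) with _ | m'
    · exact ⟨rfl, rfl, Or.inl ⟨rfl, fun m' h => by cases h⟩⟩
    · by_cases hcmp : (P.W (P.M m ⟨s.next m, hlt⟩)).symm m
          < (P.W (P.M m ⟨s.next m, hlt⟩)).symm m'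
      · simp only [if_pos hcmp]
        simp [hcmp]
      · simp only [if_neg hcmp]
        simp [hcmp]
        exact not_lt.mp hcmp


lemma unmatched_iff {s : GSState n} {m : Fin n} :
    isUnmatched s m = true ↔ ∀ w, s.wmatch w ≠ some m := by
  simp [isUnmatched]

/-- Abbreviation for the `k`-th state of the run. -/
def iter (P : Profile n) (k : ℕ) : GSState n := (GSstep P)^[k] (GSinit n)

lemma iter_succ (P : Profile n) (k : ℕ) :
    iter P (k + 1) = GSstep P (iter P k) := Function.iterate_succ_apply' _ _ _

lemma GSrun_eq_iter (P : Profile n) : GSrun P = iter P (n * n + 1) := rfl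

/-- `next` is monotone under a step. -/
lemma step_next_mono (P : Profile n) (s : GSState n) (m : Fin n) :
    s.next m ≤ (GSstep P s).next m := by
  rcases gsstep_cases P s with ⟨he, _⟩ | ⟨a, h, _, hnext, _, _⟩
  · rw [he]
  · rw [hnext]
    rcases eq_or_ne m a with rfl | hma
    · rw [Function.update_self]; omega
    · rw [Function.update_of_ne hma]

/-- `next` stays bounded by `n`. -/
lemma step_next_le (P : Profile n) (s : GSState n) (hb : ∀ m, s.next m ≤ n) (m : Fin n) :
    (GSstep P s).next m ≤ n := by
  rcases gsstep_cases P s with ⟨he, _⟩ | ⟨a, h, _, hnext, _, _⟩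
  · rw [he]; exact hb m
  · rw [hnext]
    rcases eq_or_ne m a with rfl | hma
    · rw [Function.update_self]; omega
    · rw [Function.update_of_ne hma]; exact hb m

/-- A matched woman stays matched, to a weakly better (for her) man. -/
lemma step_holder_mono (P : Profile n) (s : GSState n) (w : Fin n) (m : Fin n)
    (hm : s.wmatch w = some m) :
    ∃ m', (GSstep P s).wmatch w = some m' ∧ (P.W w).symm m' ≤ (P.W w).symm m := by
  rcases gsstep_cases P s with ⟨he, _⟩ | ⟨a, h, _, _, _, hwm⟩
  · rw [he]; exact ⟨m, hm, le_refl _⟩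
  · rcases hwm with ⟨heq, hcond⟩ | ⟨m', _, _, heq⟩
    · rcases eq_or_ne w (P.M a ⟨s.next a, h⟩) with rfl | hne
      · exact ⟨a, by rw [heq, Function.update_self], (hcond m hm).le⟩
      · exact ⟨m, by rw [heq, Function.update_of_ne hne, hm], le_refl _⟩
    · rw [heq]; exact ⟨m, hm, le_refl _⟩

def uniqHolders (s : GSState n) : Prop :=
  ∀ w w' m, s.wmatch w = some m → s.wmatch w' = some m → w = w'

lemma step_uniq (P : Profile n) (s : GSState n) (hu : uniqHolders s) :
    uniqHolders (GSstep P s) := by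
  rcases gsstep_cases P s with ⟨he, _⟩ | ⟨a, h, hum, _, _, hwm⟩
  · rw [he]; exact hu
  · have hun : ∀ w, s.wmatch w ≠ some a := unmatched_iff.mp hum
    intro w w' m hw hw'
    rcases hwm with ⟨heq, _⟩ | ⟨m', _, _, heq⟩
    · rw [heq] at hw hw'
      by_cases hne : w = P.M a ⟨s.next a, h⟩
      · subst hne
        rw [Function.update_self] at hw
        by_cases hne' : w' = P.M a ⟨s.next a, h⟩
        · subst hne'; rfl
        · rw [Function.update_of_ne hne'] at hw'
          cases hw; exact absurd hw' (hun w')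
      · rw [Function.update_of_ne hne] at hw
        by_cases hne' : w' = P.M a ⟨s.next a, h⟩
        · subst hne'
          rw [Function.update_self] at hw'
          cases hw'; exact absurd hw (hun w)
        · rw [Function.update_of_ne hne'] at hw'
          exact hu w w' m hw hw'
    · rw [heq] at hw hw'
      exact hu w w' m hw hw'

/-- Any held man has proposed to his holder: her rank on his list is below `next`. -/
def rankInv (P : Profile n) (s : GSState n) : Prop :=
  ∀ w m, s.wmatch w = some m → (((P.M m).symm w : Fin n) : ℕ) < s.next m

lemma step_rank (P : Profile n) (s : GSState n) (hr : rankInv P s) :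
    rankInv P (GSstep P s) := by
  rcases gsstep_cases P s with ⟨he, _⟩ | ⟨a, h, hum, hnext, _, hwm⟩
  · rw [he]; exact hr
  · intro w m hw
    have hbase : ∀ m, s.next m ≤ (GSstep P s).next m := step_next_mono P s
    rcases hwm with ⟨heq, _⟩ | ⟨m', _, _, heq⟩
    · rw [heq] at hw
      by_cases hne : w = P.M a ⟨s.next a, h⟩
      · subst hne
        rw [Function.update_self] at hw
        cases hw
        rw [hnext, Function.update_self, Equiv.symm_apply_apply]
        simp
      · rw [Function.update_of_ne hne] at hw
        exact lt_of_lt_of_le (hr w m hw) (hbase m)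
    · rw [heq] at hw
      exact lt_of_lt_of_le (hr w m hw) (hbase m)

lemma iter_next_le (P : Profile n) (k : ℕ) : ∀ m, (iter P k).next m ≤ n := by
  induction k with
  | zero => intro m; exact Nat.zero_le n
  | succ k ih => rw [iter_succ]; exact step_next_le P _ ih

lemma iter_uniq (P : Profile n) (k : ℕ) : uniqHolders (iter P k) := by
  induction k with
  | zero => intro w w' m hw _; cases hw
  | succ k ih => rw [iter_succ]; exact step_uniq P _ ih

lemma iter_rank (P : Profile n) (k : ℕ) : rankInv P (iter P k) := by
  induction k with
  | zero => intro w m hw; cases hw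
  | succ k ih => rw [iter_succ]; exact step_rank P _ ih

lemma iter_next_mono (P : Profile n) {k k' : ℕ} (h : k ≤ k') (m : Fin n) :
    (iter P k).next m ≤ (iter P k').next m := by
  induction k' with
  | zero => cases Nat.le_zero.mp h; exact le_refl _
  | succ k' ih =>
    rcases Nat.lt_or_ge k (k'+1) with hlt | hge
    · have := ih (Nat.lt_succ_iff.mp hlt)
      rw [iter_succ]
      exact le_trans this (step_next_mono P _ m)
    · have : k = k' + 1 := le_antisymm h hge
      subst this; exact le_refl _

lemma iter_holder_mono (P : Profile n) {k k' : ℕ} (h : k ≤ k') (w m : Fin n)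
    (hm : (iter P k).wmatch w = some m) :
    ∃ m', (iter P k').wmatch w = some m' ∧ (P.W w).symm m' ≤ (P.W w).symm m := by
  induction k' with
  | zero => cases Nat.le_zero.mp h; exact ⟨m, hm, le_refl _⟩
  | succ k' ih =>
    rcases Nat.lt_or_ge k (k'+1) with hlt | hge
    · obtain ⟨m₁, hm₁, hle₁⟩ := ih (Nat.lt_succ_iff.mp hlt)
      obtain ⟨m₂, hm₂, hle₂⟩ := step_holder_mono P _ w m₁ hm₁
      rw [iter_succ]
      exact ⟨m₂, hm₂, le_trans hle₂ hle₁⟩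
    · have : k = k' + 1 := le_antisymm h hge
      subst this; exact ⟨m, hm, le_refl _⟩

/-- Potential function: total number of proposals made. -/
def phi (s : GSState n) : ℕ := ∑ m : Fin n, s.next m

lemma phi_le (P : Profile n) (k : ℕ) : phi (iter P k) ≤ n * n := by
  calc phi (iter P k) ≤ ∑ _m : Fin n, n :=
        Finset.sum_le_sum (fun m _ => iter_next_le P k m)
    _ = n * n := by simp [Finset.sum_const, Finset.card_univ, Nat.mul_comm]

lemma step_phi (P : Profile n) (s : GSState n) (hne : GSstep P s ≠ s) :
    phi (GSstep P s) = phi s + 1 := by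
  rcases gsstep_cases P s with ⟨he, _⟩ | ⟨a, h, _, hnext, _, _⟩
  · exact absurd he hne
  · unfold phi
    rw [hnext, Finset.sum_update_of_mem (Finset.mem_univ a),
      Finset.sum_eq_sum_sdiff_singleton_add (Finset.mem_univ a) s.next]
    omega

lemma exists_fixpoint (P : Profile n) : ∃ k ≤ n * n, GSstep P (iter P k) = iter P k := by
  by_contra hc
  push_neg at hc
  have key : ∀ k, k ≤ n * n + 1 → k ≤ phi (iter P k) := by
    intro k
    induction k with
    | zero => intro _; exact Nat.zero_le _
    | succ k ih =>
      intro hk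
      have h1 := ih (by omega)
      have h2 : GSstep P (iter P k) ≠ iter P k := hc k (by omega)
      have := step_phi P (iter P k) h2
      rw [iter_succ]
      omega
  have := key (n * n + 1) (le_refl _)
  have := phi_le P (n * n + 1)
  omega

lemma iter_fix_ge (P : Profile n) {k : ℕ} (hfix : GSstep P (iter P k) = iter P k)
    {k' : ℕ} (h : k ≤ k') : iter P k' = iter P k := by
  induction k' with
  | zero => cases Nat.le_zero.mp h; rfl
  | succ k' ih =>
    rcases Nat.lt_or_ge k (k'+1) with hlt | hge
    · rw [iter_succ, ih (Nat.lt_succ_iff.mp hlt), hfix]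
    · have : k = k' + 1 := le_antisymm h hge
      subst this; rfl

lemma run_fixed (P : Profile n) : GSstep P (GSrun P) = GSrun P := by
  obtain ⟨k, hk, hfix⟩ := exists_fixpoint P
  rw [GSrun_eq_iter, iter_fix_ge P hfix (by omega : k ≤ n * n + 1), hfix]

/-- At the end of the run, every unmatched man has exhausted his list. -/
lemma run_exhausted (P : Profile n) (m : Fin n) (hum : isUnmatched (GSrun P) m = true) :
    n ≤ (GSrun P).next m := by
  rcases gsstep_cases P (GSrun P) with ⟨_, hinfo⟩ | ⟨a, h, _, _, hprops, _⟩
  · exact hinfo m hum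
  · have := run_fixed P
    rw [this] at hprops
    exact absurd (congrArg List.length hprops) (by simp)

/-- If `m`'s pointer has passed rank `r`, then at some point he proposed to the
woman of rank `r` and immediately afterwards she held someone weakly better than `m`. -/
lemma propose_reach (P : Profile n) (m : Fin n) (r : ℕ) (hr : r < n) (k : ℕ)
    (hk : r < (iter P k).next m) :
    ∃ j < k, ∃ m₁, (iter P (j+1)).wmatch (P.M m ⟨r, hr⟩) = some m₁ ∧
      (P.W (P.M m ⟨r, hr⟩)).symm m₁ ≤ (P.W (P.M m ⟨r, hr⟩)).symm m := by
  induction k with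
  | zero => simp [iter, GSinit] at hk
  | succ k ih =>
    rcases Nat.lt_or_ge r ((iter P k).next m) with hlt | hge
    · obtain ⟨j, hj, hres⟩ := ih hlt
      exact ⟨j, by omega, hres⟩
    · -- the pointer passed r exactly at step k
      rw [iter_succ] at hk
      set s := iter P k with hs
      rcases gsstep_cases P s with ⟨he, _⟩ | ⟨a, h, hum, hnext, _, hwm⟩
      · rw [he] at hk; omega
      · rw [hnext] at hk
        by_cases hma : m = a
        · subst hma
          rw [Function.update_self] at hk
          have hreq : s.next m = r := by omega
          have hb : P.M m ⟨s.next m, h⟩ = P.M m ⟨r, hr⟩ := by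
            congr 1
            exact Fin.ext hreq
          refine ⟨k, by omega, ?_⟩
          rw [iter_succ, ← hs]
          rcases hwm with ⟨heq, _⟩ | ⟨m', hbm, hncmp, heq⟩
          · refine ⟨m, ?_, le_refl _⟩
            rw [heq, ← hb, Function.update_self]
          · refine ⟨m', ?_, ?_⟩
            · rw [heq, ← hb, hbm]
            · rw [← hb]; exact not_lt.mp hncmp
        · rw [Function.update_of_ne hma] at hk; omega

/-- Final version: woman of rank `r < next m` holds someone weakly better than `m`. -/
lemma run_proposed (P : Profile n) (m : Fin n) (r : ℕ) (hr : r < n)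
    (hk : r < (GSrun P).next m) :
    ∃ m₁, (GSrun P).wmatch (P.M m ⟨r, hr⟩) = some m₁ ∧
      (P.W (P.M m ⟨r, hr⟩)).symm m₁ ≤ (P.W (P.M m ⟨r, hr⟩)).symm m := by
  rw [GSrun_eq_iter] at hk ⊢
  obtain ⟨j, hj, m₁, hm₁, hle⟩ := propose_reach P m r hr _ hk
  obtain ⟨m₂, hm₂, hle₂⟩ := iter_holder_mono P (by omega : j + 1 ≤ n*n+1) _ m₁ hm₁
  exact ⟨m₂, hm₂, le_trans hle₂ hle⟩

/-- Every woman is matched at the end of the run. -/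
lemma run_women_matched (P : Profile n) (w : Fin n) :
    ∃ m, (GSrun P).wmatch w = some m := by
  by_cases hall : ∀ m : Fin n, ∃ w', (GSrun P).wmatch w' = some m
  · -- all men matched; holders give an injective, hence surjective, assignment
    choose g hg using hall
    have hginj : Function.Injective g := by
      intro m m' hmm
      have h1 := hg m
      have h2 := hg m'
      rw [hmm, h2] at h1
      exact (Option.some_injective _ h1).symm
    obtain ⟨m, hm⟩ := Finite.injective_iff_surjective.mp hginj w
    exact ⟨m, hm ▸ hg m⟩
  · push_neg at hall
    obtain ⟨m₀, hm₀⟩ := hall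
    have hum : isUnmatched (GSrun P) m₀ = true :=
      unmatched_iff.mpr (fun w' hw' => hm₀ w' hw')
    have hnext := run_exhausted P m₀ hum
    have hr : (((P.M m₀).symm w : Fin n) : ℕ) < n := Fin.is_lt _
    obtain ⟨m₁, hm₁, _⟩ := run_proposed P m₀ _ hr (lt_of_lt_of_le hr hnext)
    refine ⟨m₁, ?_⟩
    rwa [show P.M m₀ ⟨((P.M m₀).symm w : ℕ), hr⟩ = w by
      rw [Fin.eta, Equiv.apply_symm_apply]] at hm₁

/-- Every man is matched at the end of the run. -/
lemma run_men_matched (P : Profile n) (m : Fin n) :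
    ∃ w, (GSrun P).wmatch w = some m := by
  have h := run_women_matched P
  choose g hg using h
  have hginj : Function.Injective g := by
    intro w w' hww
    exact iter_uniq P (n*n+1) w w' (g w) (hg w) (hww ▸ hg w')
  obtain ⟨w, hw⟩ := Finite.injective_iff_surjective.mp hginj m
  exact ⟨w, hw ▸ hg w⟩

lemma DA_spec (P : Profile n) (m : Fin n) : (GSrun P).wmatch (DA P m) = some m := by
  have h : ∃ w, (GSrun P).wmatch w = some m := run_men_matched P m
  rw [DA, dif_pos h]
  exact h.choose_spec

lemma DA_eq_of_wmatch (P : Profile n) {w : Fin n} {m : Fin n}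
    (h : (GSrun P).wmatch w = some m) : DA P m = w :=
  iter_uniq P (n*n+1) _ _ m (DA_spec P m) h

lemma DA_bijective (P : Profile n) : Function.Bijective (DA P) := by
  rw [Fintype.bijective_iff_injective_and_card]
  refine ⟨fun m m' hmm => ?_, rfl⟩
  have h1 := DA_spec P m
  have h2 := DA_spec P m'
  rw [hmm, h2] at h1
  exact Option.some_injective _ h1.symm

/-- The DA matching is stable. -/
lemma DA_stable (P : Profile n) : Stable P (DA P) := by
  refine ⟨DA_bijective P, fun m w hblock => ?_⟩
  obtain ⟨hm, m', hm', hw⟩ := hblock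
  have hwm' : (GSrun P).wmatch w = some m' := hm' ▸ DA_spec P m'
  have hrank := iter_rank P (n*n+1) (DA P m) m (DA_spec P m)
  have hmlt : (((P.M m).symm w : Fin n) : ℕ) < (((P.M m).symm (DA P m) : Fin n) : ℕ) := hm
  have hr : (((P.M m).symm w : Fin n) : ℕ) < n := Fin.is_lt _
  have hlt : (((P.M m).symm w : Fin n) : ℕ) < (GSrun P).next m := by
    rw [GSrun_eq_iter]; omega
  obtain ⟨m₁, hm₁, hle⟩ := run_proposed P m _ hr hlt
  rw [show P.M m ⟨((P.M m).symm w : ℕ), hr⟩ = w by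
    rw [Fin.eta, Equiv.apply_symm_apply]] at hm₁ hle
  rw [hwm'] at hm₁
  cases hm₁
  exact absurd hw (not_lt.mpr hle)

/-- Key invariant for man-optimality: no man is ever rejected by a woman who is his
partner in some stable matching. -/
lemma opt_invariant (P : Profile n) (ν : Fin n → Fin n) (hb : Function.Bijective ν)
    (hstab : ∀ m w, ¬ Blocks P ν m w) (k : ℕ) :
    ∀ m, (((P.M m).symm (ν m) : Fin n) : ℕ) < (iter P k).next m →
      (iter P k).wmatch (ν m) = some m := by
  induction k with
  | zero => intro m hm; simp [iter, GSinit] at hm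
  | succ k ih =>
    intro m hm
    rw [iter_succ] at hm ⊢
    set s := iter P k with hs
    rcases gsstep_cases P s with ⟨he, _⟩ | ⟨a, h, hum, hnext, _, hwm⟩
    · rw [he] at hm ⊢; exact ih m hm
    · have hun : ∀ w, s.wmatch w ≠ some a := unmatched_iff.mp hum
      rw [hnext] at hm
      by_cases hma : m = a
      · -- the proposing man: he proposes to ν m and must be accepted
        subst hma
        rw [Function.update_self] at hm
        have hnlt : ¬ (((P.M m).symm (ν m) : Fin n) : ℕ) < s.next m := by
          intro hcon
          exact hun (ν m) (ih m hcon)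
        have hreq : (((P.M m).symm (ν m) : Fin n) : ℕ) = s.next m := by omega
        have hbm : P.M m ⟨s.next m, h⟩ = ν m := by
          conv_rhs => rw [← Equiv.apply_symm_apply (P.M m) (ν m)]
          congr 1
          exact Fin.ext hreq.symm
        rcases hwm with ⟨heq, _⟩ | ⟨m', hbm', hncmp, heq⟩
        · rw [heq, ← hbm, Function.update_self]
        · -- rejection would create a blocking pair (m', ν m)
          exfalso
          rw [hbm] at hbm' hncmp
          have hm'a : m' ≠ m := fun hc => hun (ν m) (hc ▸ hbm')
          -- m' prefers ν m to ν m'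
          have hrk := iter_rank P k (ν m) m' hbm'
          rw [← hs] at hrk
          have hνne : ν m' ≠ ν m := fun hc => hm'a (hb.1 hc)
          have hnlt' : ¬ (((P.M m').symm (ν m') : Fin n) : ℕ) < s.next m' := by
            intro hcon
            have := ih m' hcon
            have := iter_uniq P k _ _ m' this hbm'
            exact hνne this
          have hmpref : P.mpref m' (ν m) (ν m') := by
            have hne2 : (P.M m').symm (ν m) ≠ (P.M m').symm (ν m') :=
              fun hc => hνne ((P.M m').symm.injective hc).symm
            have : (((P.M m').symm (ν m) : Fin n) : ℕ) < (((P.M m').symm (ν m') : Fin n) : ℕ) := by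
              have := Fin.val_ne_of_ne hne2
              omega
            exact this
          have hwpref : P.wpref (ν m) m' m := by
            have hne3 : (P.W (ν m)).symm m' ≠ (P.W (ν m)).symm m :=
              fun hc => hm'a ((P.W (ν m)).symm.injective hc)
            exact lt_of_le_of_ne (not_lt.mp hncmp) hne3
          exact hstab m' (ν m) ⟨hmpref, m, rfl, hwpref⟩
      · -- a bystander man: his partner must keep holding him
        rw [Function.update_of_ne hma] at hm
        have hold := ih m hm
        rcases hwm with ⟨heq, hcond⟩ | ⟨m', hbm', hncmp, heq⟩
        · rw [heq]
          by_cases hbv : ν m = P.M a ⟨s.next a, h⟩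
          · -- a proposes to ν m and she would abandon m: blocking pair (a, ν m)
            exfalso
            have hcnd := hcond m (hbv ▸ hold)
            rw [← hbv] at hcnd
            -- a prefers ν m to ν a
            have hnlt' : ¬ (((P.M a).symm (ν a) : Fin n) : ℕ) < s.next a := by
              intro hcon
              exact hun (ν a) (ih a hcon)
            have hνne : ν a ≠ ν m := fun hc => hma (hb.1 hc).symm
            have hrka : (((P.M a).symm (ν m) : Fin n) : ℕ) = s.next a := by
              rw [hbv, Equiv.symm_apply_apply]
            have hmpref : P.mpref a (ν m) (ν a) := by
              have hne2 : (P.M a).symm (ν m) ≠ (P.M a).symm (ν a) :=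
                fun hc => hνne ((P.M a).symm.injective hc).symm
              have : (((P.M a).symm (ν m) : Fin n) : ℕ) < (((P.M a).symm (ν a) : Fin n) : ℕ) := by
                have := Fin.val_ne_of_ne hne2
                omega
              exact this
            exact hstab a (ν m) ⟨hmpref, m, rfl, hcnd⟩
          · rw [Function.update_of_ne (fun hc => hbv hc), hold]
        · rw [heq]; exact hold

/-- Man-optimality of deferred acceptance. -/
lemma DA_optimal (P : Profile n) (ν : Fin n → Fin n) (hν : Stable P ν) (m : Fin n) :
    ¬ P.mpref m (ν m) (DA P m) := by
  intro hpref
  have hrank := iter_rank P (n*n+1) (DA P m) m (DA_spec P m)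
  have hlt : (((P.M m).symm (ν m) : Fin n) : ℕ) < (iter P (n*n+1)).next m := by
    have h1 : (((P.M m).symm (ν m) : Fin n) : ℕ) < (((P.M m).symm (DA P m) : Fin n) : ℕ) := hpref
    omega
  have := opt_invariant P ν hν.1 hν.2 (n*n+1) m hlt
  have hda : DA P m = ν m := DA_eq_of_wmatch P this
  rw [hda] at hpref
  exact lt_irrefl _ hpref

lemma gsstep_found (P : Profile n) (s : GSState n) (a : Fin n)
    (hf : (List.finRange n).find? (fun m => isUnmatched s m && decide (s.next m < n))
      = some a) (hlt : s.next a < n) :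
    GSstep P s =
      (match s.wmatch (P.M a ⟨s.next a, hlt⟩) with
       | none =>
         { next := Function.update s.next a (s.next a + 1),
           wmatch := Function.update s.wmatch (P.M a ⟨s.next a, hlt⟩) (some a),
           props := (a, P.M a ⟨s.next a, hlt⟩) :: s.props }
       | some m' =>
         if (P.W (P.M a ⟨s.next a, hlt⟩)).symm a
             < (P.W (P.M a ⟨s.next a, hlt⟩)).symm m' then
           { next := Function.update s.next a (s.next a + 1),
             wmatch := Function.update s.wmatch (P.M a ⟨s.next a, hlt⟩) (some a),
             props := (a, P.M a ⟨s.next a, hlt⟩) :: s.props }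
         else
           { next := Function.update s.next a (s.next a + 1),
             wmatch := s.wmatch,
             props := (a, P.M a ⟨s.next a, hlt⟩) :: s.props }) := by
  unfold GSstep
  rw [hf]
  simp only [dif_pos hlt]

lemma gsstep_accept (P : Profile n) (s : GSState n) (a : Fin n)
    (hf : (List.finRange n).find? (fun m => isUnmatched s m && decide (s.next m < n))
      = some a) (hlt : s.next a < n) (m' : Fin n)
    (hb : s.wmatch (P.M a ⟨s.next a, hlt⟩) = some m')
    (hc : (P.W (P.M a ⟨s.next a, hlt⟩)).symm a < (P.W (P.M a ⟨s.next a, hlt⟩)).symm m') :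
    (GSstep P s).wmatch (P.M a ⟨s.next a, hlt⟩) = some a := by
  rw [gsstep_found P s a hf hlt, hb]
  simp only [if_pos hc]
  exact Function.update_self _ _ _

/-- Every intermediate holder of `w` is weakly worse (for her) than the final one. -/
lemma holder_le_final (P : Profile n) (w mw : Fin n)
    (hfin : (GSrun P).wmatch w = some mw) (k : ℕ) (hk : k ≤ n*n+1) (m' : Fin n)
    (h : (iter P k).wmatch w = some m') :
    (P.W w).symm mw ≤ (P.W w).symm m' := by
  obtain ⟨m₂, hm₂, hle⟩ := iter_holder_mono P hk w m' h
  rw [GSrun_eq_iter] at hfin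
  rw [hfin] at hm₂
  cases hm₂
  exact hle

/-- Core trace-equality lemma: if `mw` ends up matched to `w` under `P`, then replacing
`w`'s list by any list that ranks `mw` first and otherwise compares non-`mw` men as
`P.W w` does gives the *identical* run. -/
lemma trace_eq (P : Profile n) (w : Fin n) (f : Fin n ≃ Fin n) (mw : Fin n)
    (hfin : (GSrun P).wmatch w = some mw)
    (Htop : ∀ x, f.symm mw ≤ f.symm x)
    (Hrel : ∀ x y, x ≠ mw → y ≠ mw →
      ((P.W w).symm x < (P.W w).symm y ↔ f.symm x < f.symm y)) :
    ∀ k, k ≤ n*n+1 → iter (P.updateW w f) k = iter P k := by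
  intro k
  induction k with
  | zero => intro _; rfl
  | succ k ih =>
    intro hk
    have hk' : k ≤ n*n+1 := by omega
    rw [iter_succ, iter_succ, ih hk']
    set s := iter P k with hs
    rcases hff : (List.finRange n).find? (fun m => isUnmatched s m && decide (s.next m < n))
      with _ | a
    · show GSstep (P.updateW w f) s = GSstep P s
      unfold GSstep
      rw [hff]
    · have hp := List.find?_some hff
      simp only [Bool.and_eq_true, decide_eq_true_eq] at hp
      obtain ⟨hum, hlt⟩ := hp
      have hun : ∀ w', s.wmatch w' ≠ some a := unmatched_iff.mp hum
      have hMeq : (P.updateW w f).M = P.M := rfl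
      rw [gsstep_found (P.updateW w f) s a hff hlt, gsstep_found P s a hff hlt]
      simp only [hMeq]
      rcases hb : s.wmatch (P.M a ⟨s.next a, hlt⟩) with _ | m'
      · rfl
      · have hm'a : m' ≠ a := fun hc => hun _ (hc ▸ hb)
        by_cases hbw : P.M a ⟨s.next a, hlt⟩ = w
        · have hWeq : (P.updateW w f).W (P.M a ⟨s.next a, hlt⟩) = f := by
            rw [hbw]; exact Function.update_self _ _ _
          rw [hWeq]
          have hbw' : s.wmatch w = some m' := hbw ▸ hb
          have hiff : (f.symm a < f.symm m') ↔
              ((P.W (P.M a ⟨s.next a, hlt⟩)).symm a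
                < (P.W (P.M a ⟨s.next a, hlt⟩)).symm m') := by
            rw [hbw]
            by_cases hamw : a = mw
            · subst hamw
              have hm'mw : m' ≠ a := hm'a
              constructor
              · intro _
                have h1 := holder_le_final P w a hfin k hk' m' hbw'
                exact lt_of_le_of_ne h1
                  (fun hc => hm'mw ((P.W w).symm.injective hc.symm))
              · intro _
                exact lt_of_le_of_ne (Htop m')
                  (fun hc => hm'mw (f.symm.injective hc.symm))
            · by_cases hm'mw : m' = mw
              · subst hm'mw
                constructor
                · intro hcon
                  exact absurd hcon (not_lt.mpr (Htop a))
                · intro hcon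
                  exfalso
                  have hacc : (GSstep P s).wmatch (P.M a ⟨s.next a, hlt⟩) = some a :=
                    gsstep_accept P s a hff hlt m' hb (by rw [hbw]; exact hcon)
                  rw [hbw] at hacc
                  have hnext : (iter P (k+1)).wmatch w = some a := by
                    rw [iter_succ, ← hs]; exact hacc
                  have := holder_le_final P w m' hfin (k+1) hk a hnext
                  exact absurd hcon (not_lt.mpr this)
              · exact (Hrel a m' hamw hm'mw).symm
          exact if_congr hiff rfl rfl
        · have hWeq : (P.updateW w f).W (P.M a ⟨s.next a, hlt⟩)
              = P.W (P.M a ⟨s.next a, hlt⟩) := by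
            show Function.update P.W w f (P.M a ⟨s.next a, hlt⟩) = _
            rw [Function.update_of_ne hbw]
          rw [hWeq]

lemma cycleRange_lt_iff_aux {N : ℕ} (r k k' : Fin (N+1)) (hk : k ≠ r) (hk' : k' ≠ r) :
    (r.cycleRange k < r.cycleRange k') ↔ k < k' := by
  rcases lt_or_gt_of_ne hk with h1 | h1 <;> rcases lt_or_gt_of_ne hk' with h2 | h2
  · rw [Fin.lt_def, Fin.coe_cycleRange_of_lt h1, Fin.coe_cycleRange_of_lt h2]
    have h1' := Fin.lt_def.mp h1
    have h2' := Fin.lt_def.mp h2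
    rw [Fin.lt_def]
    omega
  · rw [Fin.lt_def, Fin.coe_cycleRange_of_lt h1, Fin.cycleRange_of_gt h2]
    have h1' := Fin.lt_def.mp h1
    have h2' := Fin.lt_def.mp h2
    rw [Fin.lt_def]
    omega
  · rw [Fin.lt_def, Fin.cycleRange_of_gt h1, Fin.coe_cycleRange_of_lt h2]
    have h1' := Fin.lt_def.mp h1
    have h2' := Fin.lt_def.mp h2
    rw [Fin.lt_def]
    omega
  · rw [Fin.lt_def, Fin.cycleRange_of_gt h1, Fin.cycleRange_of_gt h2]
    rw [Fin.lt_def]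

/-- For any list `e` and man `a`, there is a list that ranks `a` first and otherwise
compares men exactly as `e` does. -/
lemma exists_topEquiv {N : ℕ} (e : Fin (N+1) ≃ Fin (N+1)) (a : Fin (N+1)) :
    ∃ f : Fin (N+1) ≃ Fin (N+1), (∀ x, f.symm a ≤ f.symm x) ∧
      ∀ x y, x ≠ a → y ≠ a → ((e.symm x < e.symm y) ↔ (f.symm x < f.symm y)) := by
  refine ⟨(e.symm.trans ((e.symm a).cycleRange : Equiv.Perm (Fin (N+1)))).symm, ?_, ?_⟩
  · intro x
    simp only [Equiv.symm_symm, Equiv.trans_apply]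
    rw [Fin.cycleRange_self]
    exact Fin.zero_le _
  · intro x y hx hy
    simp only [Equiv.symm_symm, Equiv.trans_apply]
    have hx' : e.symm x ≠ e.symm a := fun hc => hx (e.symm.injective hc)
    have hy' : e.symm y ≠ e.symm a := fun hc => hy (e.symm.injective hc)
    exact (cycleRange_lt_iff_aux (e.symm a) _ _ hx' hy').symm


lemma DA_congr_run (P Q : Profile n) (h : GSrun P = GSrun Q) : DA P = DA Q := by
  funext m
  unfold DA
  rw [h]

end NonBossy
/-- DA is non-bossy for women: if a single woman misreports and her
DA partner is unchanged, then the whole DA matching is unchanged. -/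
theorem DA_nonbossy_for_women (n : ℕ) (P : Profile n) (w : Fin n)
    (e' : Fin n ≃ Fin n)
    (hsame : ∀ m : Fin n, DA P m = w ↔ DA (P.updateW w e') m = w) :
    DA (P.updateW w e') = DA P := by
  cases n with
  | zero => funext m; exact m.elim0
  | succ N =>
    set P' := P.updateW w e' with hP'
    obtain ⟨mw, hmw⟩ := (NonBossy.DA_bijective P).2 w
    have hmw' : DA P' mw = w := (hsame mw).mp hmw
    have hfinP : (GSrun P).wmatch w = some mw := by rw [← hmw]; exact NonBossy.DA_spec P mw
    have hfinP' : (GSrun P').wmatch w = some mw := by rw [← hmw']; exact NonBossy.DA_spec P' mw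
    obtain ⟨f, Htop, Hrel⟩ := NonBossy.exists_topEquiv (P.W w) mw
    obtain ⟨f', Htop', Hrel'⟩ := NonBossy.exists_topEquiv (P'.W w) mw
    have hDA1 : DA (P.updateW w f) = DA P := by
      apply NonBossy.DA_congr_run
      rw [NonBossy.GSrun_eq_iter, NonBossy.GSrun_eq_iter]
      exact NonBossy.trace_eq P w f mw hfinP Htop Hrel _ le_rfl
    have hDA2 : DA (P'.updateW w f') = DA P' := by
      apply NonBossy.DA_congr_run
      rw [NonBossy.GSrun_eq_iter, NonBossy.GSrun_eq_iter]
      exact NonBossy.trace_eq P' w f' mw hfinP' Htop' Hrel' _ le_rfl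
    have hstab2 : Stable (P'.updateW w f') (DA P) := by
      refine ⟨NonBossy.DA_bijective P, fun m w₂ hblock => ?_⟩
      obtain ⟨hm, m'', hm'', hwp⟩ := hblock
      by_cases hw₂ : w₂ = w
      · subst hw₂
        have hm''w : m'' = mw := (NonBossy.DA_bijective P).1 (hm''.trans hmw.symm)
        subst hm''w
        have hWW : (P'.updateW w₂ f').W w₂ = f' := Function.update_self _ _ _
        rw [Profile.wpref, hWW] at hwp
        exact absurd hwp (not_lt.mpr (Htop' m))
      · have hWW : (P'.updateW w f').W w₂ = P.W w₂ := by
          show Function.update P'.W w f' w₂ = _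
          rw [Function.update_of_ne hw₂]
          show Function.update P.W w e' w₂ = _
          rw [Function.update_of_ne hw₂]
        rw [Profile.wpref, hWW] at hwp
        exact (NonBossy.DA_stable P).2 m w₂ ⟨hm, m'', hm'', hwp⟩
    have hstab1 : Stable (P.updateW w f) (DA P') := by
      refine ⟨NonBossy.DA_bijective P', fun m w₂ hblock => ?_⟩
      obtain ⟨hm, m'', hm'', hwp⟩ := hblock
      by_cases hw₂ : w₂ = w
      · subst hw₂
        have hm''w : m'' = mw := (NonBossy.DA_bijective P').1 (hm''.trans hmw'.symm)
        subst hm''w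
        have hWW : (P.updateW w₂ f).W w₂ = f := Function.update_self _ _ _
        rw [Profile.wpref, hWW] at hwp
        exact absurd hwp (not_lt.mpr (Htop m))
      · have hWW : (P.updateW w f).W w₂ = P'.W w₂ := by
          show Function.update P.W w f w₂ = _
          rw [Function.update_of_ne hw₂]
          show _ = Function.update P.W w e' w₂
          rw [Function.update_of_ne hw₂]
        rw [Profile.wpref, hWW] at hwp
        exact (NonBossy.DA_stable P').2 m w₂ ⟨hm, m'', hm'', hwp⟩
    have hopt1 := NonBossy.DA_optimal (P.updateW w f) (DA P') hstab1
    have hopt2 := NonBossy.DA_optimal (P'.updateW w f') (DA P) hstab2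
    funext m
    have e1 : ¬ (P.M m).symm (DA P' m) < (P.M m).symm (DA P m) := by
      have := hopt1 m
      rw [Profile.mpref, hDA1] at this
      exact this
    have e2 : ¬ (P.M m).symm (DA P m) < (P.M m).symm (DA P' m) := by
      have := hopt2 m
      rw [Profile.mpref, hDA2] at this
      exact this
    have heq : (P.M m).symm (DA P' m) = (P.M m).symm (DA P m) :=
      le_antisymm (not_lt.mp e2) (not_lt.mp e1)
    exact (P.M m).symm.injective heq
end

section
/- If a fixed man m permutes arbitrarily the portion of his preference list strictly above his DA partner μ(m) and arbitrarily the portion strictly below μ(m), keeping μ(m) in the same position, then the DA matching on the new profile is identical to the original DA matching. -/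
/-! ### Auxiliary development for the proof -/

section DADevelopment

open Function

variable {n : ℕ}

/-- The proposer found by one step of the algorithm. -/
def fp (Q : Profile n) (t : GSState n) : Option (Fin n) :=
  (List.finRange n).find? (fun m => isUnmatched t m && decide (t.next m < n))

/-- Rank of woman `w` in man `x`'s list. -/
def mrank (Q : Profile n) (x w : Fin n) : ℕ := ((Q.M x).symm w : ℕ)

/-- Rank of man `x` in woman `w`'s list. -/
def wrank (Q : Profile n) (w x : Fin n) : ℕ := ((Q.W w).symm x : ℕ)

/-- The state after `k` steps. -/
def st (Q : Profile n) (k : ℕ) : GSState n := (GSstep Q)^[k] (GSinit n)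

lemma st_succ (Q : Profile n) (k : ℕ) : st Q (k + 1) = GSstep Q (st Q k) :=
  Function.iterate_succ_apply' _ _ _

lemma GSrun_eq_st (Q : Profile n) : GSrun Q = st Q (n * n + 1) := rfl

lemma GSstep_def (Q : Profile n) (t : GSState n) : GSstep Q t =
    (match fp Q t with
    | none => t
    | some m =>
      if h : t.next m < n then
        let w := Q.M m ⟨t.next m, h⟩
        let s' : GSState n :=
          { next := Function.update t.next m (t.next m + 1),
            wmatch := t.wmatch,
            props := (m, w) :: t.props }
        match t.wmatch w with
        | none => { s' with wmatch := Function.update t.wmatch w (some m) }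
        | some m' =>
            if (Q.W w).symm m < (Q.W w).symm m' then
              { s' with wmatch := Function.update t.wmatch w (some m) }
            else s'
      else t) := rfl

lemma fp_some {Q : Profile n} {t : GSState n} {m : Fin n} (h : fp Q t = some m) :
    (∀ w, t.wmatch w ≠ some m) ∧ t.next m < n := by
  have h2 := List.find?_some h
  simp only [Bool.and_eq_true, decide_eq_true_eq, isUnmatched] at h2
  exact h2

lemma fp_none {Q : Profile n} {t : GSState n} (h : fp Q t = none) (m : Fin n) :
    (∃ w, t.wmatch w = some m) ∨ n ≤ t.next m := by
  have h2 := List.find?_eq_none.mp h m (List.mem_finRange m)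
  simp only [Bool.and_eq_true, decide_eq_true_eq, isUnmatched, not_and] at h2
  by_cases hm : ∀ w, t.wmatch w ≠ some m
  · right; exact le_of_not_gt (h2 hm)
  · left; push_neg at hm; exact hm

lemma step_none {Q : Profile n} {t : GSState n} (h : fp Q t = none) :
    GSstep Q t = t := by
  rw [GSstep_def, h]

lemma step_some {Q : Profile n} {t : GSState n} {m : Fin n} (h : fp Q t = some m) :
    ∃ hn : t.next m < n,
      (GSstep Q t).next = Function.update t.next m (t.next m + 1) ∧
      (((GSstep Q t).wmatch = Function.update t.wmatch (Q.M m ⟨t.next m, hn⟩) (some m) ∧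
        ∀ y, t.wmatch (Q.M m ⟨t.next m, hn⟩) = some y →
          (Q.W (Q.M m ⟨t.next m, hn⟩)).symm m < (Q.W (Q.M m ⟨t.next m, hn⟩)).symm y) ∨
       ((GSstep Q t).wmatch = t.wmatch ∧
        ∃ y, t.wmatch (Q.M m ⟨t.next m, hn⟩) = some y ∧
          ¬ (Q.W (Q.M m ⟨t.next m, hn⟩)).symm m < (Q.W (Q.M m ⟨t.next m, hn⟩)).symm y)) := by
  obtain ⟨hu, hn⟩ := fp_some h
  refine ⟨hn, ?_⟩
  rw [GSstep_def, h]
  dsimp only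
  rw [dif_pos hn]
  rcases hw : t.wmatch (Q.M m ⟨t.next m, hn⟩) with _ | y
  · dsimp only
    exact ⟨rfl, Or.inl ⟨rfl, by intro y hy; simp at hy⟩⟩
  · dsimp only
    by_cases hc : (Q.W (Q.M m ⟨t.next m, hn⟩)).symm m < (Q.W (Q.M m ⟨t.next m, hn⟩)).symm y
    · rw [if_pos hc]
      refine ⟨rfl, Or.inl ⟨rfl, ?_⟩⟩
      intro z hz; cases hz; exact hc
    · rw [if_neg hc]
      exact ⟨rfl, Or.inr ⟨rfl, y, rfl, hc⟩⟩

lemma mrank_target (Q : Profile n) (m : Fin n) (v : ℕ) (h : v < n) :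
    mrank Q m (Q.M m ⟨v, h⟩) = v := by
  simp [mrank]


/-- The key invariants of the Gale–Shapley state. -/
structure GSInv (Q : Profile n) (t : GSState n) : Prop where
  nle : ∀ x, t.next x ≤ n
  held : ∀ w x, t.wmatch w = some x → t.next x = mrank Q x w + 1
  prp : ∀ (x r : Fin n), (r : ℕ) < t.next x →
    ∃ y, t.wmatch (Q.M x r) = some y ∧ wrank Q (Q.M x r) y ≤ wrank Q (Q.M x r) x

lemma GSInv_init (Q : Profile n) : GSInv Q (GSinit n) := by
  constructor
  · intro x; exact Nat.zero_le n
  · intro w x h; exact absurd h (by simp [GSinit])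
  · intro x r hr; exact absurd hr (by simp [GSinit])

lemma GSInv_step {Q : Profile n} {t : GSState n} (hI : GSInv Q t) : GSInv Q (GSstep Q t) := by
  rcases hfp : fp Q t with _ | m
  · rw [step_none hfp]; exact hI
  · obtain ⟨hn, hnext, hwm⟩ := step_some hfp
    have hu := (fp_some hfp).1
    set w : Fin n := Q.M m ⟨t.next m, hn⟩ with hwdef
    have hmr : mrank Q m w = t.next m := mrank_target Q m _ hn
    constructor
    · intro x
      rw [hnext]
      by_cases hx : x = m
      · subst hx; rw [Function.update_self]; exact hn
      · rw [Function.update_of_ne hx]; exact hI.nle x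
    · intro w' x hx
      rw [hnext]
      rcases hwm with ⟨hacc, hcond⟩ | ⟨hrej, y, hy, hcomp⟩
      · rw [hacc] at hx
        by_cases hww : w' = w
        · subst hww
          rw [Function.update_self] at hx
          cases hx
          rw [Function.update_self, hmr]
        · rw [Function.update_of_ne hww] at hx
          have hxm : x ≠ m := fun h => hu w' (h ▸ hx)
          rw [Function.update_of_ne hxm]
          exact hI.held w' x hx
      · rw [hrej] at hx
        have hxm : x ≠ m := fun h => hu w' (h ▸ hx)
        rw [Function.update_of_ne hxm]
        exact hI.held w' x hx
    · intro x r hr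
      rw [hnext] at hr
      by_cases hx : x = m
      · subst hx
        rw [Function.update_self] at hr
        by_cases hrr : (r : ℕ) < t.next x
        · obtain ⟨y, hy, hb⟩ := hI.prp x r hrr
          rcases hwm with ⟨hacc, hcond⟩ | ⟨hrej, y', hy', hcomp⟩
          · by_cases hQw : Q.M x r = w
            · refine ⟨x, ?_, le_refl _⟩
              rw [hacc, hQw, Function.update_self]
            · refine ⟨y, ?_, hb⟩
              rw [hacc, Function.update_of_ne hQw]; exact hy
          · exact ⟨y, by rw [hrej]; exact hy, hb⟩
        · have hrv : (r : ℕ) = t.next x := by omega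
          have hQw : Q.M x r = w := by
            rw [hwdef]; congr 1; exact Fin.ext hrv
          rcases hwm with ⟨hacc, hcond⟩ | ⟨hrej, y', hy', hcomp⟩
          · refine ⟨x, ?_, le_refl _⟩
            rw [hacc, hQw, Function.update_self]
          · refine ⟨y', by rw [hrej, hQw]; exact hy', ?_⟩
            rw [hQw]
            have := Fin.not_lt.mp hcomp
            exact this
      · rw [Function.update_of_ne hx] at hr
        obtain ⟨y, hy, hb⟩ := hI.prp x r hr
        rcases hwm with ⟨hacc, hcond⟩ | ⟨hrej, y', hy', hcomp⟩
        · by_cases hQw : Q.M x r = w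
          · refine ⟨m, ?_, ?_⟩
            · rw [hacc, hQw, Function.update_self]
            · rw [hQw] at hy hb ⊢
              have := hcond y hy
              exact le_trans (le_of_lt this) hb
          · refine ⟨y, ?_, hb⟩
            rw [hacc, Function.update_of_ne hQw]; exact hy
        · exact ⟨y, by rw [hrej]; exact hy, hb⟩

lemma inv_st (Q : Profile n) (k : ℕ) : GSInv Q (st Q k) := by
  induction k with
  | zero => exact GSInv_init Q
  | succ k ih => rw [st_succ]; exact GSInv_step ih

lemma next_mono_step (Q : Profile n) (t : GSState n) (x : Fin n) :
    t.next x ≤ (GSstep Q t).next x := by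
  rcases hfp : fp Q t with _ | m
  · rw [step_none hfp]
  · obtain ⟨hn, hnext, -⟩ := step_some hfp
    rw [hnext]
    by_cases hx : x = m
    · subst hx; rw [Function.update_self]; omega
    · rw [Function.update_of_ne hx]

lemma next_mono (Q : Profile n) {k k' : ℕ} (h : k ≤ k') (x : Fin n) :
    (st Q k).next x ≤ (st Q k').next x := by
  induction k' with
  | zero =>
    have : k = 0 := by omega
    subst this; exact le_refl _
  | succ k' ih =>
    rcases Nat.lt_or_ge k (k' + 1) with h1 | h1
    · have := ih (by omega)
      rw [st_succ]
      exact le_trans this (next_mono_step Q _ x)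
    · have : k = k' + 1 := by omega
      subst this; exact le_refl _

lemma holder_step {Q : Profile n} {t : GSState n} {w y : Fin n}
    (hy : t.wmatch w = some y) :
    ∃ z, (GSstep Q t).wmatch w = some z ∧ wrank Q w z ≤ wrank Q w y := by
  rcases hfp : fp Q t with _ | m
  · rw [step_none hfp]; exact ⟨y, hy, le_refl _⟩
  · obtain ⟨hn, -, hwm⟩ := step_some hfp
    rcases hwm with ⟨hacc, hcond⟩ | ⟨hrej, -⟩
    · by_cases hQw : w = Q.M m ⟨t.next m, hn⟩
      · subst hQw
        refine ⟨m, by rw [hacc, Function.update_self], ?_⟩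
        have := hcond y hy
        simpa [wrank, Fin.lt_def] using le_of_lt this
      · exact ⟨y, by rw [hacc, Function.update_of_ne hQw]; exact hy, le_refl _⟩
    · exact ⟨y, by rw [hrej]; exact hy, le_refl _⟩

lemma holder_mono (Q : Profile n) {k k' : ℕ} (h : k ≤ k') {w y : Fin n}
    (hy : (st Q k).wmatch w = some y) :
    ∃ z, (st Q k').wmatch w = some z ∧ wrank Q w z ≤ wrank Q w y := by
  induction k' with
  | zero =>
    have : k = 0 := by omega
    subst this; exact ⟨y, hy, le_refl _⟩
  | succ k' ih =>
    rcases Nat.lt_or_ge k (k' + 1) with h1 | h1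
    · obtain ⟨z, hz, hzle⟩ := ih (by omega)
      obtain ⟨z', hz', hz'le⟩ := holder_step (Q := Q) hz
      rw [st_succ]
      exact ⟨z', hz', le_trans hz'le hzle⟩
    · have : k = k' + 1 := by omega
      subst this; exact ⟨y, hy, le_refl _⟩

lemma rejected_step {Q : Profile n} {t : GSState n} {x w : Fin n}
    (h1 : mrank Q x w < t.next x) (h2 : t.wmatch w ≠ some x) :
    (GSstep Q t).wmatch w ≠ some x := by
  rcases hfp : fp Q t with _ | m
  · rw [step_none hfp]; exact h2
  · obtain ⟨hn, -, hwm⟩ := step_some hfp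
    rcases hwm with ⟨hacc, -⟩ | ⟨hrej, -⟩
    · rw [hacc]
      by_cases hQw : w = Q.M m ⟨t.next m, hn⟩
      · subst hQw
        rw [Function.update_self]
        intro hc
        cases hc
        rw [mrank_target] at h1
        omega
      · rw [Function.update_of_ne hQw]; exact h2
    · rw [hrej]; exact h2

lemma rejected_mono (Q : Profile n) {k k' : ℕ} (h : k ≤ k') {x w : Fin n}
    (h1 : mrank Q x w < (st Q k).next x) (h2 : (st Q k).wmatch w ≠ some x) :
    (st Q k').wmatch w ≠ some x := by
  induction k' with
  | zero =>
    have : k = 0 := by omega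
    subst this; exact h2
  | succ k' ih =>
    rcases Nat.lt_or_ge k (k' + 1) with hlt | hge
    · have hrec := ih (by omega)
      have hnext := lt_of_lt_of_le h1 (next_mono Q (by omega : k ≤ k') x)
      rw [st_succ]
      exact rejected_step hnext hrec
    · have : k = k' + 1 := by omega
      subst this; exact h2

lemma exists_prop_time {Q : Profile n} {x : Fin n} {r k : ℕ}
    (hk : r < (st Q k).next x) :
    ∃ t, t < k ∧ fp Q (st Q t) = some x ∧ (st Q t).next x = r := by
  induction k with
  | zero => exact absurd hk (by simp [st, GSinit])
  | succ k ih =>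
    by_cases hr : r < (st Q k).next x
    · obtain ⟨t, ht, h2, h3⟩ := ih hr
      exact ⟨t, by omega, h2, h3⟩
    · push_neg at hr
      rw [st_succ] at hk
      rcases hfp : fp Q (st Q k) with _ | m
      · rw [step_none hfp] at hk; omega
      · obtain ⟨hn, hnext, -⟩ := step_some hfp
        rw [hnext] at hk
        by_cases hx : x = m
        · subst hx
          rw [Function.update_self] at hk
          have : r = (st Q k).next x := by omega
          exact ⟨k, by omega, hfp, this.symm⟩
        · rw [Function.update_of_ne hx] at hk; omega


lemma sum_next_step {Q : Profile n} {t : GSState n} {m : Fin n} (h : fp Q t = some m) :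
    ∑ x, (GSstep Q t).next x = (∑ x, t.next x) + 1 := by
  obtain ⟨hn, hnext, -⟩ := step_some h
  rw [hnext, Finset.sum_update_of_mem (Finset.mem_univ m), Finset.sdiff_singleton_eq_erase]
  rw [← Finset.sum_erase_add Finset.univ _ (Finset.mem_univ m)]
  omega

lemma sum_next_le (Q : Profile n) (k : ℕ) : ∑ x, (st Q k).next x ≤ n * n := by
  have := (inv_st Q k).nle
  calc ∑ x, (st Q k).next x ≤ ∑ _x : Fin n, n := Finset.sum_le_sum (fun i _ => this i)
  _ = n * n := by simp [Finset.sum_const, Finset.card_univ, mul_comm]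

lemma st_stable (Q : Profile n) {k : ℕ} (hk : fp Q (st Q k) = none) {k' : ℕ} (h : k ≤ k') :
    st Q k' = st Q k := by
  induction k' with
  | zero =>
    have : k = 0 := by omega
    subst this; rfl
  | succ k' ih =>
    rcases Nat.lt_or_ge k (k' + 1) with h1 | h1
    · have := ih (by omega)
      rw [st_succ, this, step_none hk]
    · have : k = k' + 1 := by omega
      subst this; rfl

lemma fp_final (Q : Profile n) : fp Q (st Q (n * n + 1)) = none := by
  by_cases hex : ∃ k, k ≤ n * n ∧ fp Q (st Q k) = none
  · obtain ⟨k, hk, hnone⟩ := hex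
    rw [st_stable Q hnone (by omega)]
    exact hnone
  · exfalso
    push_neg at hex
    have key : ∀ k, k ≤ n * n + 1 → k ≤ ∑ x, (st Q k).next x := by
      intro k
      induction k with
      | zero => intro _; exact Nat.zero_le _
      | succ k ih =>
        intro hk
        have h1 := ih (by omega)
        have h2 := hex k (by omega)
        rcases hsome : fp Q (st Q k) with _ | m
        · exact absurd hsome h2
        · have := sum_next_step hsome
          rw [st_succ, this]
          omega
    have := key (n * n + 1) (le_refl _)
    have := sum_next_le Q (n * n + 1)
    omega

lemma final_matched (Q : Profile n) (x : Fin n) :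
    ∃ w, (st Q (n * n + 1)).wmatch w = some x := by
  by_contra hcon
  push_neg at hcon
  have hI := inv_st Q (n * n + 1)
  have hx : n ≤ (st Q (n * n + 1)).next x := by
    rcases fp_none (fp_final Q) x with ⟨w, hw⟩ | h
    · exact absurd hw (hcon w)
    · exact h
  have hall : ∀ w, ∃ y, (st Q (n * n + 1)).wmatch w = some y := by
    intro w
    have hr : (((Q.M x).symm w : Fin n) : ℕ) < (st Q (n * n + 1)).next x :=
      lt_of_lt_of_le (Fin.is_lt _) hx
    obtain ⟨y, hy, -⟩ := hI.prp x ((Q.M x).symm w) hr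
    rw [Equiv.apply_symm_apply] at hy
    exact ⟨y, hy⟩
  choose g hg using hall
  have hinj : Function.Injective g := by
    intro w1 w2 hww
    have h1 := hI.held w1 (g w1) (hg w1)
    have h2 := hI.held w2 (g w2) (hg w2)
    rw [hww] at h1
    have : ((Q.M (g w2)).symm w1 : ℕ) = ((Q.M (g w2)).symm w2 : ℕ) := by
      simp only [mrank] at h1 h2; omega
    have := (Q.M (g w2)).symm.injective (Fin.ext this)
    exact this
  obtain ⟨w, hw⟩ := Finite.injective_iff_surjective.mp hinj x
  exact hcon w (hw ▸ hg w)

lemma DA_match (Q : Profile n) (x : Fin n) :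
    (st Q (n * n + 1)).wmatch (DA Q x) = some x := by
  have hx : ∃ w, (GSrun Q).wmatch w = some x := final_matched Q x
  show (GSrun Q).wmatch (DA Q x) = some x
  unfold DA
  rw [dif_pos hx]
  exact hx.choose_spec

lemma next_final (Q : Profile n) (x : Fin n) :
    (st Q (n * n + 1)).next x = mrank Q x (DA Q x) + 1 :=
  (inv_st Q (n * n + 1)).held _ _ (DA_match Q x)

lemma wmatch_final_eq {Q : Profile n} {w x : Fin n}
    (h : (st Q (n * n + 1)).wmatch w = some x) : DA Q x = w := by
  have h1 := (inv_st Q (n * n + 1)).held _ _ h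
  have h2 := next_final Q x
  have : mrank Q x w = mrank Q x (DA Q x) := by omega
  simp only [mrank] at this
  have := (Q.M x).symm.injective (Fin.ext this)
  exact this.symm

lemma DA_injective (Q : Profile n) : Function.Injective (DA Q) := by
  intro x1 x2 h
  have h1 := DA_match Q x1
  have h2 := DA_match Q x2
  rw [h] at h1
  exact Option.some.inj (h1.symm.trans h2)

lemma DA_bijective (Q : Profile n) : Function.Bijective (DA Q) :=
  (Finite.injective_iff_bijective).mp (DA_injective Q)

theorem DA_stable (Q : Profile n) : Stable Q (DA Q) := by
  refine ⟨DA_bijective Q, ?_⟩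
  rintro m w ⟨h1, m', hm', h2⟩
  have hI := inv_st Q (n * n + 1)
  have hr : (((Q.M m).symm w : Fin n) : ℕ) < (st Q (n * n + 1)).next m := by
    rw [next_final]
    have : ((Q.M m).symm w : ℕ) < ((Q.M m).symm (DA Q m) : ℕ) := h1
    simp only [mrank]
    omega
  obtain ⟨y, hy, hb⟩ := hI.prp m ((Q.M m).symm w) hr
  rw [Equiv.apply_symm_apply] at hy hb
  have hym : y = m' := by
    have := DA_match Q m'
    rw [hm'] at this
    rw [hy] at this
    exact Option.some.inj this
  subst hym
  have h2' : wrank Q w m < wrank Q w y := h2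
  simp only [wrank] at h2' hb
  omega


lemma opt_inv (Q : Profile n) (ρ : Fin n → Fin n) (hρ : Stable Q ρ) (k : ℕ) :
    ∀ (x r : Fin n), (r : ℕ) < (st Q k).next x →
      (st Q k).wmatch (Q.M x r) ≠ some x → ρ x ≠ Q.M x r := by
  induction k with
  | zero => intro x r hr _; exact absurd hr (by simp [st, GSinit])
  | succ k IH =>
    intro x r hr hw heq
    rw [st_succ] at hr hw
    rcases hfp : fp Q (st Q k) with _ | m
    · rw [step_none hfp] at hr hw
      exact IH x r hr hw heq
    · obtain ⟨hn, hnext, hwm⟩ := step_some hfp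
      have hu := (fp_some hfp).1
      have hI := inv_st Q k
      set t := st Q k with htdef
      set w : Fin n := Q.M m ⟨t.next m, hn⟩ with hwdef
      have hmr : mrank Q m w = t.next m := mrank_target Q m _ hn
      rw [hnext] at hr
      have key : ∀ z : Fin n, ρ z ≠ w → mrank Q z w ≤ t.next z →
          (∀ w', t.wmatch w' = some z → w' = w) → Q.mpref z w (ρ z) := by
        intro z hz1 hz2 hz3
        have hstep : ∀ r₂ : Fin n, (r₂ : ℕ) < mrank Q z w → ρ z ≠ Q.M z r₂ := by
          intro r₂ h₂
          refine IH z r₂ (by omega) ?_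
          intro hc
          have h3 := hz3 _ hc
          have : (r₂ : ℕ) = mrank Q z w := by
            simp only [mrank, ← h3, Equiv.symm_apply_apply]
          omega
        by_contra hpref
        have hle : ((Q.M z).symm (ρ z) : ℕ) ≤ ((Q.M z).symm w : ℕ) := Fin.not_lt.mp hpref
        have hne : ((Q.M z).symm (ρ z) : ℕ) ≠ ((Q.M z).symm w : ℕ) := by
          intro hc
          exact hz1 ((Q.M z).symm.injective (Fin.ext hc) ▸ rfl :  ρ z = w)
        have hlt : ((Q.M z).symm (ρ z) : ℕ) < mrank Q z w := by
          simp only [mrank]; omega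
        exact hstep _ hlt (by rw [Equiv.apply_symm_apply])
      by_cases hxm : x = m ∧ (r : ℕ) = t.next m
      · obtain ⟨hx, hrv⟩ := hxm
        subst hx
        have hQ : Q.M x r = w := by rw [hwdef]; congr 1; exact Fin.ext hrv
        rcases hwm with ⟨hacc, hcond⟩ | ⟨hrej, y, hy, hcomp⟩
        · rw [hacc, hQ, Function.update_self] at hw; exact hw rfl
        · have hym : y ≠ x := fun h => hu w (h ▸ hy)
          have hρy : ρ y ≠ w := by
            intro hc
            exact hym (hρ.1.1 (hc.trans (heq.trans hQ).symm))
          have hheld := hI.held w y hy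
          have huniq : ∀ w', t.wmatch w' = some y → w' = w := by
            intro w' hw'
            have h2 := hI.held w' y hw'
            have hmm : mrank Q y w' = mrank Q y w := by omega
            simp only [mrank] at hmm
            exact (Q.M y).symm.injective (Fin.ext hmm)
          have hblock : Blocks Q ρ y w := by
            refine ⟨key y hρy (by omega) huniq, x, heq.trans hQ, ?_⟩
            have hle : (Q.W w).symm y ≤ (Q.W w).symm x := Fin.not_lt.mp hcomp
            exact lt_of_le_of_ne hle (fun hc => hym ((Q.W w).symm.injective hc))
          exact hρ.2 y w hblock
      · have hr' : (r : ℕ) < t.next x := by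
          by_cases hx : x = m
          · subst hx; rw [Function.update_self] at hr
            rcases Nat.lt_or_ge (r : ℕ) (t.next x) with h | h
            · exact h
            · exact absurd ⟨rfl, by omega⟩ hxm
          · rw [Function.update_of_ne hx] at hr; exact hr
        rcases hwm with ⟨hacc, hcond⟩ | ⟨hrej, y, hy, hcomp⟩
        · by_cases hQw : Q.M x r = w
          · have hxm' : x ≠ m := by
              intro hc; subst hc
              have hre : r = (⟨t.next x, hn⟩ : Fin n) := (Q.M x).injective hQw
              exact hxm ⟨rfl, by rw [hre]⟩
            rcases hOld : t.wmatch w with _ | y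
            · exact IH x r hr' (by rw [hQw, hOld]; simp) heq
            · by_cases hyx : y = x
              · have hOldx : t.wmatch w = some x := by rw [hOld, hyx]
                have hρm : ρ m ≠ w := by
                  intro hc
                  exact hxm' (hρ.1.1 ((heq.trans hQw).trans hc.symm))
                have hblock : Blocks Q ρ m w := by
                  refine ⟨key m hρm (le_of_eq hmr) (fun w' hw' => absurd hw' (hu w')),
                    x, heq.trans hQw, hcond x hOldx⟩
                exact hρ.2 m w hblock
              · exact IH x r hr'
                  (by rw [hQw, hOld]; exact fun hc => hyx (Option.some.inj hc)) heq
          · refine IH x r hr' ?_ heq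
            rw [hacc, Function.update_of_ne hQw] at hw; exact hw
        · refine IH x r hr' ?_ heq
          rw [hrej] at hw; exact hw

lemma DA_optimal (Q : Profile n) (ρ : Fin n → Fin n) (hρ : Stable Q ρ) (x : Fin n) :
    mrank Q x (DA Q x) ≤ mrank Q x (ρ x) := by
  by_contra hcon
  push_neg at hcon
  have hr : (((Q.M x).symm (ρ x) : Fin n) : ℕ) < (st Q (n * n + 1)).next x := by
    rw [next_final]; simp only [mrank] at hcon ⊢; omega
  have hne : (st Q (n * n + 1)).wmatch (Q.M x ((Q.M x).symm (ρ x))) ≠ some x := by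
    rw [Equiv.apply_symm_apply]
    intro hc
    have hda := wmatch_final_eq hc
    rw [hda] at hcon
    exact lt_irrefl _ hcon
  exact opt_inv Q ρ hρ (n * n + 1) x ((Q.M x).symm (ρ x)) hr hne
    (Equiv.apply_symm_apply _ _).symm


/-- The key lemma (essentially the Blocking Lemma / strategy-proofness core):
if `ν` is a bijection such that every man matched differently strictly prefers `ν`
to the DA matching, and no man matched identically forms a blocking pair for `ν`,
then `ν` is the DA matching. -/
theorem GS_key (Q : Profile n) (ν : Fin n → Fin n) (hbij : Function.Bijective ν)
    (hS : ∀ i, ν i ≠ DA Q i → Q.mpref i (ν i) (DA Q i))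
    (hnb : ∀ i w, ν i = DA Q i → ¬ Blocks Q ν i w) :
    ∀ i, ν i = DA Q i := by
  classical
  by_contra hc
  push_neg at hc
  obtain ⟨i₀, hi₀⟩ := hc
  have hpall : ∀ i, ∃ t, t < n * n + 1 ∧ fp Q (st Q t) = some i ∧
      (st Q t).next i = mrank Q i (DA Q i) := by
    intro i
    have h1 : mrank Q i (DA Q i) < (st Q (n * n + 1)).next i := by
      rw [next_final]; omega
    obtain ⟨t, ht, h2, h3⟩ := exists_prop_time h1
    exact ⟨t, ht, h2, h3⟩
  choose p hp1 hp2 hp3 using hpall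
  set S : Finset (Fin n) := Finset.univ.filter (fun i => ν i ≠ DA Q i) with hSdef
  have hSne : S.Nonempty := ⟨i₀, by simp [hSdef, hi₀]⟩
  obtain ⟨i₁, hi₁S, hmax⟩ := S.exists_max_image p hSne
  have hi₁ : ν i₁ ≠ DA Q i₁ := by simpa [hSdef] using hi₁S
  set w₁ := DA Q i₁ with hw₁
  obtain ⟨j, hj⟩ := hbij.2 w₁
  have hji : j ≠ i₁ := fun h => hi₁ (h ▸ hj)
  have hjS : ν j ≠ DA Q j := by
    intro h
    exact hji (DA_injective Q (by rw [← h, hj]))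
  have hjpref : mrank Q j (ν j) < mrank Q j (DA Q j) := hS j hjS
  -- j proposes to w₁ at time q
  have hq0 : mrank Q j w₁ < (st Q (p j)).next j := by
    rw [hp3 j, ← hj]; exact hjpref
  obtain ⟨q, hq, hqfp, hqn⟩ := exists_prop_time hq0
  have hjmem : j ∈ S := by simp [hSdef, hjS]
  have hqlt : q < p i₁ := lt_of_lt_of_le hq (hmax j hjmem)
  obtain ⟨hnq, hqnext, hqw⟩ := step_some hqfp
  have htargetq : Q.M j ⟨(st Q q).next j, hnq⟩ = w₁ := by
    have h1 : (⟨(st Q q).next j, hnq⟩ : Fin n) = (Q.M j).symm w₁ := by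
      refine Fin.ext ?_
      show (st Q q).next j = ((Q.M j).symm w₁ : ℕ)
      exact hqn
    rw [h1, Equiv.apply_symm_apply]
  have hafter : ∃ z, (st Q (q + 1)).wmatch w₁ = some z ∧ wrank Q w₁ z ≤ wrank Q w₁ j := by
    rcases hqw with ⟨hacc, -⟩ | ⟨hrej, y, hy, hcomp⟩
    · rw [st_succ, hacc, htargetq, Function.update_self]
      exact ⟨j, rfl, le_refl _⟩
    · rw [st_succ, hrej]
      rw [htargetq] at hy
      refine ⟨y, hy, ?_⟩
      rw [htargetq] at hcomp
      exact Fin.not_lt.mp hcomp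
  obtain ⟨z₀, hz₀, hz₀le⟩ := hafter
  obtain ⟨h, hh, hhle⟩ := holder_mono Q (Nat.succ_le_of_lt hqlt) hz₀
  have hhj : wrank Q w₁ h ≤ wrank Q w₁ j := le_trans hhle hz₀le
  -- the event at time p i₁
  obtain ⟨hn1, hn1next, hn1w⟩ := step_some (hp2 i₁)
  have hu1 := (fp_some (hp2 i₁)).1
  have htarget1 : Q.M i₁ ⟨(st Q (p i₁)).next i₁, hn1⟩ = w₁ := by
    have h1 : (⟨(st Q (p i₁)).next i₁, hn1⟩ : Fin n) = (Q.M i₁).symm w₁ := by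
      refine Fin.ext ?_
      show (st Q (p i₁)).next i₁ = ((Q.M i₁).symm w₁ : ℕ)
      exact hp3 i₁
    rw [h1, Equiv.apply_symm_apply]
  have hhi : h ≠ i₁ := fun hh' => hu1 w₁ (hh' ▸ hh)
  rcases hn1w with ⟨hacc, hcond⟩ | ⟨hrej, y, hy, hcomp⟩
  · -- i₁ accepted, h rejected at p i₁
    rw [htarget1] at hacc hcond
    have hri : (Q.W w₁).symm i₁ < (Q.W w₁).symm h := hcond h hh
    have hrej_h : (st Q (p i₁ + 1)).wmatch w₁ ≠ some h := by
      rw [st_succ, hacc, Function.update_self]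
      exact fun hc => hhi (Option.some.inj hc).symm
    have hnext_h : (st Q (p i₁)).next h = mrank Q h w₁ + 1 :=
      (inv_st Q (p i₁)).held _ _ hh
    have hnext_h' : mrank Q h w₁ < (st Q (p i₁ + 1)).next h := by
      rw [st_succ, hn1next, Function.update_of_ne hhi, hnext_h]; omega
    have hfar : (st Q (n * n + 1)).wmatch w₁ ≠ some h :=
      rejected_mono Q (by have := hp1 i₁; omega : p i₁ + 1 ≤ n * n + 1) hnext_h' hrej_h
    have hDAh : DA Q h ≠ w₁ := fun hcontra => hfar (hcontra ▸ DA_match Q h)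
    have hrank_h : mrank Q h w₁ < mrank Q h (DA Q h) := by
      have hmono : (st Q (p i₁)).next h ≤ (st Q (n * n + 1)).next h :=
        next_mono Q (by have := hp1 i₁; omega : p i₁ ≤ n * n + 1) h
      rw [hnext_h, next_final] at hmono
      have hne : mrank Q h w₁ ≠ mrank Q h (DA Q h) := by
        intro he
        simp only [mrank] at he
        exact hDAh (((Q.M h).symm.injective (Fin.ext he)).symm ▸ rfl)
      omega
    by_cases hhS : ν h = DA Q h
    · refine hnb h w₁ hhS ⟨?_, j, hj, ?_⟩
      · show (Q.M h).symm w₁ < (Q.M h).symm (ν h)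
        rw [hhS]
        exact hrank_h
      · show (Q.W w₁).symm h < (Q.W w₁).symm j
        have hhjne : h ≠ j := fun hc => hjS (hc ▸ hhS)
        have : wrank Q w₁ h ≠ wrank Q w₁ j := by
          simp only [wrank]
          exact fun hc => hhjne ((Q.W w₁).symm.injective (Fin.ext hc))
        simp only [wrank] at hhj this
        omega
    · have hhSmem : h ∈ S := by simp [hSdef, hhS]
      have hple : p h ≤ p i₁ := hmax h hhSmem
      have hpne : p h ≠ p i₁ := by
        intro he
        have h1 := hp2 h
        rw [he, hp2 i₁] at h1
        exact hhi (Option.some.inj h1).symm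
      have hplt : p h < p i₁ := lt_of_le_of_ne hple hpne
      have hu_h := (fp_some (hp2 h)).1
      have hnlt : mrank Q h w₁ < (st Q (p h)).next h := by
        rw [hp3 h]; omega
      exact rejected_mono Q (le_of_lt hplt) hnlt (hu_h w₁) hh
  · -- i₁ rejected at p i₁: impossible since his final partner is w₁
    rw [htarget1] at hy
    have hyh : y = h := by
      rw [hh] at hy; exact Option.some.inj hy.symm
    have hrejd : (st Q (p i₁ + 1)).wmatch w₁ ≠ some i₁ := by
      rw [st_succ, hrej, hh]
      exact fun hc => hhi (Option.some.inj hc)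
    have hnext' : mrank Q i₁ w₁ < (st Q (p i₁ + 1)).next i₁ := by
      rw [st_succ, hn1next, Function.update_self, hp3 i₁, hw₁]
      omega
    exact rejected_mono Q (by have := hp1 i₁; omega : p i₁ + 1 ≤ n * n + 1) hnext' hrejd
      (DA_match Q i₁)

end DADevelopment

/-- Permuting the parts of a man's list strictly above and strictly
below his DA partner (keeping the partner in place) does not change the DA matching. -/
theorem DA_permute_above_below (n : ℕ) (P : Profile n) (m : Fin n)
    (e' : Fin n ≃ Fin n)
    (hAbove : Above e' (DA P m) = Above (P.M m) (DA P m)) :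
    DA (P.updateM m e') = DA P := by
  classical
  set P' := P.updateM m e' with hP'
  have hMm : P'.M m = e' := by
    rw [hP']; show Function.update P.M m e' m = e'; rw [Function.update_self]
  have hMne : ∀ i, i ≠ m → P'.M i = P.M i := by
    intro i hi
    rw [hP']; show Function.update P.M m e' i = P.M i; rw [Function.update_of_ne hi]
  have habove : ∀ w, e'.symm w < e'.symm (DA P m) ↔ (P.M m).symm w < (P.M m).symm (DA P m) := by
    intro w
    have h1 := Set.ext_iff.mp hAbove w
    simpa [Above, Set.mem_setOf_eq] using h1
  have hμst : Stable P (DA P) := DA_stable P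
  have hμst' : Stable P' (DA P) := by
    refine ⟨hμst.1, ?_⟩
    rintro i w ⟨h1, i2, h2, h3⟩
    refine hμst.2 i w ⟨?_, i2, h2, h3⟩
    by_cases him : i = m
    · subst him
      have h1' : e'.symm w < e'.symm (DA P i) := by
        have h1'' : (P'.M i).symm w < (P'.M i).symm (DA P i) := h1
        rwa [hMm] at h1''
      exact (habove w).mp h1'
    · have h1'' : (P'.M i).symm w < (P'.M i).symm (DA P i) := h1
      rwa [hMne i him] at h1''
  have hνst' : Stable P' (DA P') := DA_stable P'
  have hopt : ∀ i, mrank P' i (DA P' i) ≤ mrank P' i (DA P i) := fun i =>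
    DA_optimal P' (DA P) hμst' i
  have hSkey : ∀ i, DA P' i ≠ DA P i → P.mpref i (DA P' i) (DA P i) := by
    intro i hne
    have h1 := hopt i
    by_cases him : i = m
    · subst him
      simp only [mrank, hMm] at h1
      have h2 : (e'.symm (DA P' i) : ℕ) ≠ (e'.symm (DA P i) : ℕ) := by
        intro hc
        exact hne (e'.symm.injective (Fin.ext hc))
      have h3 : e'.symm (DA P' i) < e'.symm (DA P i) := by
        rw [Fin.lt_def]; omega
      exact (habove _).mp h3
    · simp only [mrank, hMne i him] at h1
      have h2 : ((P.M i).symm (DA P' i) : ℕ) ≠ ((P.M i).symm (DA P i) : ℕ) := by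
        intro hc
        exact hne ((P.M i).symm.injective (Fin.ext hc))
      show (P.M i).symm (DA P' i) < (P.M i).symm (DA P i)
      rw [Fin.lt_def]; omega
  have hnb : ∀ i w, DA P' i = DA P i → ¬ Blocks P (DA P') i w := by
    rintro i w hiw ⟨h1, i2, h2, h3⟩
    refine hνst'.2 i w ⟨?_, i2, h2, h3⟩
    by_cases him : i = m
    · subst him
      show (P'.M i).symm w < (P'.M i).symm (DA P' i)
      rw [hMm, hiw]
      refine (habove w).mpr ?_
      have h1' : (P.M i).symm w < (P.M i).symm (DA P' i) := h1
      rwa [hiw] at h1'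
    · show (P'.M i).symm w < (P'.M i).symm (DA P' i)
      rw [hMne i him]
      exact h1
  have hall := GS_key P (DA P') (DA_bijective P') hSkey hnb
  funext i
  exact hall i
end

section
/- If a fixed man m pushes down a subset X of women originally ranked above his DA partner μ(m) (moving them below μ(m) in his list), then in the resulting DA matching every man is weakly better off, and m is still matched to μ(m). -/
namespace Profile

variable {n : ℕ} (P : Profile n)

def mrank (m w : Fin n) : ℕ := (P.M m).symm w

def wrank (w m : Fin n) : ℕ := (P.W w).symm m

lemma mrank_lt (m w : Fin n) : P.mrank m w < n := ((P.M m).symm w).isLt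

lemma mrank_injective (m : Fin n) : Function.Injective (P.mrank m) :=
  fun _ _ h => (P.M m).symm.injective (Fin.val_injective h)

lemma wrank_injective (w : Fin n) : Function.Injective (P.wrank w) :=
  fun _ _ h => (P.W w).symm.injective (Fin.val_injective h)

lemma mpref_iff {m w₁ w₂ : Fin n} : P.mpref m w₁ w₂ ↔ P.mrank m w₁ < P.mrank m w₂ := Fin.lt_def

lemma wpref_iff {w m₁ m₂ : Fin n} : P.wpref w m₁ m₂ ↔ P.wrank w m₁ < P.wrank w m₂ := Fin.lt_def

lemma updateM_M_self (m : Fin n) (e : Fin n ≃ Fin n) : (P.updateM m e).M m = e :=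
  Function.update_self _ _ _

lemma updateM_M_of_ne {m m' : Fin n} (e : Fin n ≃ Fin n) (h : m' ≠ m) :
    (P.updateM m e).M m' = P.M m' :=
  Function.update_of_ne h _ _

end Profile

section GaleShapley

variable {n : ℕ} (P : Profile n)

structure ProposalStep (s t : GSState n) (m w : Fin n) : Prop where
  unmatched : ∀ w', s.wmatch w' ≠ some m
  rank_eq : P.mrank m w = s.next m
  next_eq : t.next = Function.update s.next m (s.next m + 1)
  wmatch_of_ne : ∀ w', w' ≠ w → t.wmatch w' = s.wmatch w'
  /-- `m₀` is the man `w` keeps: the better of `m` and the man she held before, if any. -/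
  held : ∃ m₀, t.wmatch w = some m₀ ∧ (m₀ = m ∨ s.wmatch w = some m₀) ∧
    P.wrank w m₀ ≤ P.wrank w m ∧ ∀ m', s.wmatch w = some m' → P.wrank w m₀ ≤ P.wrank w m'

lemma GSstep_cases (s : GSState n) :
    (GSstep P s = s ∧ ∀ m, (∀ w, s.wmatch w ≠ some m) → n ≤ s.next m) ∨
    ∃ m w, ProposalStep P s (GSstep P s) m w := by
  rcases hf : (List.finRange n).find?
      (fun m => isUnmatched s m && decide (s.next m < n)) with _ | m
  · refine .inl ⟨by simp only [GSstep, hf], fun m hm => ?_⟩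
    simpa [isUnmatched, hm] using List.find?_eq_none.mp hf m (List.mem_finRange m)
  · obtain ⟨hum, hlt⟩ : (∀ w, s.wmatch w ≠ some m) ∧ s.next m < n := by
      simpa [isUnmatched] using List.find?_some hf
    refine .inr ⟨m, P.M m ⟨s.next m, hlt⟩, ?_⟩
    have hrank : P.mrank m (P.M m ⟨s.next m, hlt⟩) = s.next m := by simp [Profile.mrank]
    unfold GSstep
    simp only [hf, dif_pos hlt]
    split
    next hnone =>
      exact ⟨hum, hrank, rfl, fun w' hw => Function.update_of_ne hw _ _, m, by simp, .inl rfl,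
        le_rfl, by simp [hnone]⟩
    next m' hm' =>
      split
      next hlt =>
        refine ⟨hum, hrank, rfl, fun w' hw => Function.update_of_ne hw _ _, m, by simp, .inl rfl,
          le_rfl, ?_⟩
        simp only [hm', Option.some.injEq, forall_eq']
        exact (Fin.lt_def.mp hlt).le
      next hge =>
        refine ⟨hum, hrank, rfl, fun _ _ => rfl, m', hm', .inr hm', ?_, ?_⟩
        · exact Nat.le_of_not_lt fun h => hge (Fin.lt_def.mpr h)
        · simp [hm']

structure GSInvariant (s : GSState n) : Prop where
  next_le : ∀ m, s.next m ≤ n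
  wmatch_inj : ∀ w w' m, s.wmatch w = some m → s.wmatch w' = some m → w = w'
  next_of_held : ∀ w m, s.wmatch w = some m → s.next m = P.mrank m w + 1
  held_of_proposed : ∀ m w, P.mrank m w < s.next m →
    ∃ m', s.wmatch w = some m' ∧ P.wrank w m' ≤ P.wrank w m

lemma GSInvariant.init : GSInvariant P (GSinit n) :=
  ⟨fun _ => Nat.zero_le n, by simp [GSinit], by simp [GSinit], by simp [GSinit]⟩

namespace ProposalStep

variable {P} {s t : GSState n} {m w : Fin n}

lemma next_self (h : ProposalStep P s t m w) : t.next m = s.next m + 1 := by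
  rw [h.next_eq, Function.update_self]

lemma next_of_ne (h : ProposalStep P s t m w) {x : Fin n} (hx : x ≠ m) :
    t.next x = s.next x := by
  rw [h.next_eq, Function.update_of_ne hx]

lemma sum_next (h : ProposalStep P s t m w) : ∑ x, t.next x = ∑ x, s.next x + 1 := by
  rw [h.next_eq, Finset.sum_update_of_mem (Finset.mem_univ m), Finset.sdiff_singleton_eq_erase,
    ← Finset.add_sum_erase _ _ (Finset.mem_univ m)]
  ring

lemma wmatch_cases (h : ProposalStep P s t m w) {w' x : Fin n} (hx : t.wmatch w' = some x) :
    (w' = w ∧ x = m) ∨ s.wmatch w' = some x := by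
  rcases eq_or_ne w' w with rfl | hw'
  · obtain ⟨m₀, hm₀, hsrc, -⟩ := h.held
    obtain rfl : m₀ = x := Option.some.inj (hm₀.symm.trans hx)
    exact hsrc.imp_left (⟨rfl, ·⟩)
  · exact .inr (h.wmatch_of_ne w' hw' ▸ hx)

lemma exists_wmatch_of_wmatch (h : ProposalStep P s t m w) {w' y : Fin n}
    (hy : s.wmatch w' = some y) : ∃ y', t.wmatch w' = some y' ∧ P.wrank w' y' ≤ P.wrank w' y := by
  rcases eq_or_ne w' w with rfl | hw'
  · obtain ⟨m₀, hm₀, -, -, hbest⟩ := h.held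
    exact ⟨m₀, hm₀, hbest y hy⟩
  · exact ⟨y, h.wmatch_of_ne w' hw' ▸ hy, le_rfl⟩

lemma invariant (h : ProposalStep P s t m w) (hs : GSInvariant P s) : GSInvariant P t where
  next_le x := by
    rcases eq_or_ne x m with rfl | hx
    · have := P.mrank_lt x w
      have := h.rank_eq
      rw [h.next_self]; omega
    · rw [h.next_of_ne hx]; exact hs.next_le x
  wmatch_inj w₁ w₂ x h₁ h₂ := by
    rcases h.wmatch_cases h₁ with ⟨rfl, rfl⟩ | h₁ <;> rcases h.wmatch_cases h₂ with ⟨hw, hx⟩ | h₂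
    · exact hw.symm
    · exact absurd h₂ (h.unmatched w₂)
    · exact absurd (hx ▸ h₁) (h.unmatched w₁)
    · exact hs.wmatch_inj w₁ w₂ x h₁ h₂
  next_of_held w' x hx := by
    rcases h.wmatch_cases hx with ⟨rfl, rfl⟩ | hx
    · rw [h.next_self, h.rank_eq]
    · have hxm : x ≠ m := by rintro rfl; exact h.unmatched w' hx
      rw [h.next_of_ne hxm, hs.next_of_held w' x hx]
  held_of_proposed x w' hlt := by
    by_cases hnew : x = m ∧ P.mrank x w' = s.next x
    · obtain ⟨rfl, hrank⟩ := hnew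
      obtain rfl : w' = w := P.mrank_injective x (hrank.trans h.rank_eq.symm)
      obtain ⟨m₀, hm₀, -, hle, -⟩ := h.held
      exact ⟨m₀, hm₀, hle⟩
    · have hold : P.mrank x w' < s.next x := by
        rcases eq_or_ne x m with rfl | hx
        · rw [h.next_self] at hlt; omega
        · rwa [h.next_of_ne hx] at hlt
      obtain ⟨y, hy, hyx⟩ := hs.held_of_proposed x w' hold
      obtain ⟨y', hy', hy'y⟩ := h.exists_wmatch_of_wmatch hy
      exact ⟨y', hy', hy'y.trans hyx⟩

end ProposalStep

def GSiter (k : ℕ) : GSState n := (GSstep P)^[k] (GSinit n)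

lemma GSiter_succ (k : ℕ) : GSiter P (k + 1) = GSstep P (GSiter P k) :=
  Function.iterate_succ_apply' _ _ _

lemma GSInvariant.iter (k : ℕ) : GSInvariant P (GSiter P k) := by
  induction k with
  | zero => exact .init P
  | succ k ih =>
    rw [GSiter_succ]
    rcases GSstep_cases P (GSiter P k) with ⟨hfix, -⟩ | ⟨m, w, hstep⟩
    · rwa [hfix]
    · exact hstep.invariant ih

lemma GSrun_eq_GSiter : GSrun P = GSiter P (n * n + 1) := rfl

lemma le_sum_next_of_forall_ne (k : ℕ) (hk : ∀ j < k, GSstep P (GSiter P j) ≠ GSiter P j) :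
    k ≤ ∑ x, (GSiter P k).next x := by
  induction k with
  | zero => exact Nat.zero_le _
  | succ k ih =>
    rcases GSstep_cases P (GSiter P k) with ⟨hfix, -⟩ | ⟨m, w, hstep⟩
    · exact absurd hfix (hk k k.lt_succ_self)
    · rw [GSiter_succ, hstep.sum_next]
      have := ih fun j hj => hk j (Nat.lt_succ_of_lt hj)
      omega

lemma GSstep_GSrun : GSstep P (GSrun P) = GSrun P := by
  obtain ⟨k, hk, hfix⟩ : ∃ k < n * n + 1, GSstep P (GSiter P k) = GSiter P k := by
    by_contra! hne
    have hle := le_sum_next_of_forall_ne P (n * n + 1) hne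
    have hsum : ∑ x, (GSiter P (n * n + 1)).next x ≤ n * n := by
      simpa using Finset.sum_le_sum (s := Finset.univ) fun x _ =>
        (GSInvariant.iter P (n * n + 1)).next_le x
    omega
  have hrun : GSrun P = GSiter P k := by
    rw [GSrun_eq_GSiter, GSiter, ← Nat.sub_add_cancel hk.le, Function.iterate_add_apply]
    exact Function.iterate_fixed hfix _
  rw [hrun, hfix]

lemma GSrun_next_of_unmatched {m : Fin n} (hm : ∀ w, (GSrun P).wmatch w ≠ some m) :
    (GSrun P).next m = n := by
  rcases GSstep_cases P (GSrun P) with ⟨-, hterm⟩ | ⟨m', w, hstep⟩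
  · exact le_antisymm ((GSInvariant.iter P _).next_le m) (hterm m hm)
  · have := hstep.next_self
    rw [GSstep_GSrun] at this
    omega

/-- An unmatched man has proposed to every woman, so every woman holds someone; as no man is held
twice, all `n` men are held. -/
lemma exists_GSrun_wmatch_eq_some (m : Fin n) : ∃ w, (GSrun P).wmatch w = some m := by
  by_contra! hm
  have hinv := GSInvariant.iter P (n * n + 1)
  have hall : ∀ w, ∃ m', (GSrun P).wmatch w = some m' := fun w => by
    have hprop : P.mrank m w < (GSrun P).next m := by
      rw [GSrun_next_of_unmatched P hm]; exact P.mrank_lt m w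
    exact (hinv.held_of_proposed m w hprop).imp fun _ h => h.1
  choose f hf using hall
  have hinj : Function.Injective f := fun w w' h =>
    hinv.wmatch_inj w w' (f w) (hf w) (h ▸ hf w')
  obtain ⟨w, rfl⟩ := Finite.surjective_of_injective hinj m
  exact hm w (hf w)

lemma GSrun_wmatch_DA (m : Fin n) : (GSrun P).wmatch (DA P m) = some m := by
  rw [DA, dif_pos (exists_GSrun_wmatch_eq_some P m)]
  exact (exists_GSrun_wmatch_eq_some P m).choose_spec

lemma GSrun_wmatch_eq_some_iff {w m : Fin n} : (GSrun P).wmatch w = some m ↔ DA P m = w :=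
  ⟨fun h => (GSInvariant.iter P _).wmatch_inj _ _ _ (GSrun_wmatch_DA P m) h,
    fun h => h ▸ GSrun_wmatch_DA P m⟩

lemma DA_injective_s3 : Function.Injective (DA P) := fun m m' h =>
  Option.some.inj ((GSrun_wmatch_DA P m).symm.trans (h ▸ GSrun_wmatch_DA P m'))

lemma DA_bijective_s3 : Function.Bijective (DA P) :=
  Finite.injective_iff_bijective.mp (DA_injective_s3 P)

lemma GSrun_next (m : Fin n) : (GSrun P).next m = P.mrank m (DA P m) + 1 :=
  (GSInvariant.iter P _).next_of_held _ _ (GSrun_wmatch_DA P m)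

lemma DA_stable_s3 : Stable P (DA P) := by
  refine ⟨DA_bijective_s3 P, ?_⟩
  rintro m w ⟨hmw, m', rfl, hwm⟩
  have hprop : P.mrank m (DA P m') < (GSrun P).next m := by
    rw [GSrun_next]; have := (P.mpref_iff).mp hmw; omega
  obtain ⟨p, hp, hpm⟩ := (GSInvariant.iter P _).held_of_proposed m _ hprop
  obtain rfl := DA_injective_s3 P ((GSrun_wmatch_eq_some_iff P).mp hp)
  have := (P.wpref_iff).mp hwm
  omega

def ProposesAt (k : ℕ) (m w : Fin n) : Prop :=
  ProposalStep P (GSiter P k) (GSiter P (k + 1)) m w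

lemma GSiter_next_mono (m : Fin n) : Monotone fun k => (GSiter P k).next m := by
  refine monotone_nat_of_le_succ fun k => ?_
  simp only [GSiter_succ]
  rcases GSstep_cases P (GSiter P k) with ⟨hfix, -⟩ | ⟨m', w, hstep⟩
  · rw [hfix]
  · rcases eq_or_ne m m' with rfl | hm
    · rw [hstep.next_self]; omega
    · rw [hstep.next_of_ne hm]

lemma GSiter_eq_GSrun {k : ℕ} (hk : n * n + 1 ≤ k) : GSiter P k = GSrun P := by
  rw [GSiter, ← Nat.sub_add_cancel hk, Function.iterate_add_apply]
  exact Function.iterate_fixed (GSstep_GSrun P) _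

lemma GSiter_next_le_GSrun_next (k : ℕ) (m : Fin n) :
    (GSiter P k).next m ≤ (GSrun P).next m := by
  rcases le_total k (n * n + 1) with hk | hk
  · exact GSiter_next_mono P m hk
  · rw [GSiter_eq_GSrun P hk]

lemma exists_proposesAt {K : ℕ} {m w : Fin n} (h : P.mrank m w < (GSiter P K).next m) :
    ∃ k < K, ProposesAt P k m w := by
  induction K with
  | zero => simp [GSiter, GSinit] at h
  | succ K ih =>
    by_cases hK : P.mrank m w < (GSiter P K).next m
    · obtain ⟨k, hk, hprop⟩ := ih hK
      exact ⟨k, by omega, hprop⟩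
    · rw [GSiter_succ] at h
      rcases GSstep_cases P (GSiter P K) with ⟨hfix, -⟩ | ⟨m', w', hstep⟩
      · rw [hfix] at h; exact absurd h hK
      · obtain rfl : m' = m := by
          by_contra hm
          rw [hstep.next_of_ne (Ne.symm hm)] at h
          exact hK h
        rw [hstep.next_self] at h
        obtain rfl : w' = w := P.mrank_injective m' (by have := hstep.rank_eq; omega)
        refine ⟨K, K.lt_succ_self, ?_⟩
        rwa [ProposesAt, GSiter_succ]

lemma exists_proposesAt_of_mrank_le {m w : Fin n} (h : P.mrank m w ≤ P.mrank m (DA P m)) :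
    ∃ k, ProposesAt P k m w :=
  (exists_proposesAt P (K := n * n + 1) (by rw [← GSrun_eq_GSiter, GSrun_next]; omega)).imp
    fun _ hk => hk.2

namespace ProposesAt

variable {P} {k l : ℕ} {m w : Fin n}

lemma lt (h : ProposesAt P k m w) : k < n * n + 1 := by
  by_contra! hk
  have := h.next_self
  rw [GSiter_eq_GSrun P hk, GSiter_eq_GSrun P (by omega)] at this
  omega

lemma unique (h : ProposesAt P k m w) {m' w' : Fin n} (h' : ProposesAt P k m' w') :
    m = m' ∧ w = w' := by
  obtain rfl : m = m' := by
    by_contra hm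
    have := h'.next_of_ne hm
    rw [h.next_self] at this
    omega
  exact ⟨rfl, P.mrank_injective m (h.rank_eq.trans h'.rank_eq.symm)⟩

lemma mrank_lt_next (h : ProposesAt P k m w) (hkl : k < l) : P.mrank m w < (GSiter P l).next m := by
  have : (GSiter P (k + 1)).next m ≤ (GSiter P l).next m := GSiter_next_mono P m hkl
  rw [h.next_self, ← h.rank_eq] at this
  omega

lemma mrank_le_DA (h : ProposesAt P k m w) : P.mrank m w ≤ P.mrank m (DA P m) := by
  have := GSiter_next_le_GSrun_next P (k + 1) m
  rw [GSrun_next, h.next_self, ← h.rank_eq] at this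
  omega

lemma mrank_lt_next_of_le {t : ℕ} {m' w' : Fin n} (h : ProposesAt P k m w)
    (h' : ProposesAt P t m' w') (hkt : k ≤ t) (hm : m ≠ m') : P.mrank m w < (GSiter P t).next m :=
  h.mrank_lt_next (lt_of_le_of_ne hkt fun hk => hm (h.unique (hk ▸ h')).1)

lemma mrank_lt_of_lt {w' : Fin n} (h : ProposesAt P k m w) (h' : ProposesAt P l m w')
    (hkl : k < l) : P.mrank m w < P.mrank m w' :=
  h'.rank_eq ▸ h.mrank_lt_next hkl

lemma eq_DA_of_le (h : ProposesAt P k m w) (h' : ProposesAt P l m (DA P m)) (hlk : l ≤ k) :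
    w = DA P m := by
  rcases hlk.lt_or_eq with hlt | rfl
  · exact absurd (h.mrank_le_DA) (not_le.mpr (h'.mrank_lt_of_lt h hlt))
  · exact (h.unique h').2

end ProposesAt

lemma mrank_lt_DA_of_GSiter_wmatch {t : ℕ} {m w : Fin n} (h : (GSiter P t).wmatch w = some m)
    (hw : DA P m ≠ w) : P.mrank m w < P.mrank m (DA P m) := by
  have := GSiter_next_le_GSrun_next P t m
  rw [GSrun_next, (GSInvariant.iter P t).next_of_held _ _ h] at this
  exact lt_of_le_of_ne (by omega) fun h => hw (P.mrank_injective m h).symm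

end GaleShapley

section Blocking

variable {n : ℕ} {P : Profile n} {ν : Fin n → Fin n}

lemma blocks_of_DA_eq {m₀ p : Fin n} (hν : Function.Injective ν)
    (hm₀ : P.mpref m₀ (ν m₀) (DA P m₀)) (hp : DA P p = ν m₀)
    (hpν : ¬ P.mpref p (ν p) (DA P p)) : Blocks P ν p (ν m₀) := by
  have hpm₀ : p ≠ m₀ := by
    rintro rfl
    exact lt_irrefl _ (hp ▸ hm₀)
  have hwp : P.wpref (ν m₀) p m₀ := by
    have := (DA_stable_s3 P).2 m₀ (ν m₀)
    simp only [Blocks, hm₀, true_and, not_exists, not_and] at this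
    exact lt_of_le_of_ne (not_lt.mp (this p hp)) fun h => hpm₀ ((P.W _).symm.injective h)
  refine ⟨?_, m₀, rfl, hwp⟩
  rw [← hp]
  exact lt_of_le_of_ne (not_lt.mp hpν) fun h =>
    hpm₀ (hν (((P.M p).symm.injective h).symm.trans hp))

lemma exists_last_proposesAt_DA {S : Finset (Fin n)} (hne : S.Nonempty) :
    ∃ t, ∃ m₁ ∈ S, ProposesAt P t m₁ (DA P m₁) ∧
      ∀ k, ∀ m ∈ S, ∀ w ∈ S.image (DA P), ProposesAt P k m w → k ≤ t := by
  classical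
  set Q := fun k => ∃ m ∈ S, ∃ w ∈ S.image (DA P), ProposesAt P k m w
  have hlt : ∀ k, Q k → k < n * n + 1 := fun k ⟨_, _, _, _, hk⟩ => hk.lt
  obtain ⟨m₀, hm₀⟩ := hne
  obtain ⟨t₀, ht₀⟩ := exists_proposesAt_of_mrank_le P (le_refl (P.mrank m₀ (DA P m₀)))
  have hQ₀ : Q t₀ := ⟨m₀, hm₀, _, Finset.mem_image_of_mem _ hm₀, ht₀⟩
  have hlast : ∀ k, Q k → k ≤ Nat.findGreatest Q (n * n + 1) := fun k hk =>
    Nat.le_findGreatest (hlt k hk).le hk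
  obtain ⟨m₁, hm₁, w₁, hw₁, ht⟩ := Nat.findGreatest_spec (P := Q) (hlt t₀ hQ₀).le hQ₀
  obtain ⟨t₁, ht₁⟩ := exists_proposesAt_of_mrank_le P (le_refl (P.mrank m₁ (DA P m₁)))
  have hw₁ : w₁ = DA P m₁ :=
    ht.eq_DA_of_le ht₁ (hlast t₁ ⟨m₁, hm₁, _, Finset.mem_image_of_mem _ hm₁, ht₁⟩)
  exact ⟨_, m₁, hm₁, hw₁ ▸ ht, fun k m hm w hw hk => hlast k ⟨m, hm, w, hw, hk⟩⟩

/-- The last proposal of a man of `S` to a woman of `μ(S) = ν(S)` is some `m₁` proposing to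
`w = μ(m₁)`. The `ν`-partner of `w` is in `S`, so he proposed to her earlier; hence when `m₁`
proposes, `w` holds a man `m₂` she likes at least as much. As `m₂ ≠ m₁`, he ends strictly below `w`
in his list, and he is not in `S`, since his proposal to `μ(m₂)` would come after the last one. So
`(m₂, w)` blocks `ν`. -/
lemma exists_blocks_of_image_eq {S : Finset (Fin n)}
    (hS : ∀ m, m ∈ S ↔ P.mpref m (ν m) (DA P m)) (himg : S.image ν = S.image (DA P))
    (hne : S.Nonempty) : ∃ m₂ w, m₂ ∉ S ∧ Blocks P ν m₂ w := by
  obtain ⟨t, m₁, hm₁, ht, hlast⟩ := exists_last_proposesAt_DA hne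
  have hw₁ : DA P m₁ ∈ S.image (DA P) := Finset.mem_image_of_mem _ hm₁
  obtain ⟨m₃, hm₃, hν₃⟩ := Finset.mem_image.mp (himg ▸ hw₁)
  have hm₃₁ : m₃ ≠ m₁ := by
    rintro rfl
    exact lt_irrefl _ (hν₃ ▸ (hS m₃).mp hm₃)
  obtain ⟨t₃, ht₃⟩ := exists_proposesAt_of_mrank_le P (m := m₃) (w := DA P m₁)
    (hν₃ ▸ ((P.mpref_iff).mp ((hS m₃).mp hm₃)).le)
  obtain ⟨m₂, hm₂, hm₂₃⟩ := (GSInvariant.iter P t).held_of_proposed m₃ _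
    (ht₃.mrank_lt_next_of_le ht (hlast t₃ m₃ hm₃ _ hw₁ ht₃) hm₃₁)
  have hm₂₁ : m₂ ≠ m₁ := by
    rintro rfl
    exact ht.unmatched _ hm₂
  have hlt₂ : P.mrank m₂ (DA P m₁) < P.mrank m₂ (DA P m₂) :=
    mrank_lt_DA_of_GSiter_wmatch P hm₂ fun h => hm₂₁ (DA_injective_s3 P h)
  have hm₂S : m₂ ∉ S := by
    intro hm₂S
    obtain ⟨t₂, ht₂⟩ := exists_proposesAt_of_mrank_le P (le_refl (P.mrank m₂ (DA P m₂)))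
    have := ht₂.mrank_lt_next_of_le ht
      (hlast t₂ m₂ hm₂S _ (Finset.mem_image_of_mem _ hm₂S) ht₂) hm₂₁
    rw [(GSInvariant.iter P t).next_of_held _ _ hm₂] at this
    omega
  refine ⟨m₂, DA P m₁, hm₂S, ?_, m₃, hν₃, ?_⟩
  · have := (P.mpref_iff).not.mp (mt (hS m₂).mpr hm₂S)
    exact (P.mpref_iff).mpr (by omega)
  · exact (P.wpref_iff).mpr (lt_of_le_of_ne hm₂₃ fun h => hm₂S (P.wrank_injective _ h ▸ hm₃))

lemma exists_blocks_of_mpref_DA (hν : Function.Injective ν)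
    (hne : ∃ m, P.mpref m (ν m) (DA P m)) :
    ∃ m₂ w, ¬ P.mpref m₂ (ν m₂) (DA P m₂) ∧ Blocks P ν m₂ w := by
  classical
  set S := Finset.univ.filter fun m => P.mpref m (ν m) (DA P m)
  have hS : ∀ m, m ∈ S ↔ P.mpref m (ν m) (DA P m) := by simp [S]
  by_cases hsub : S.image ν ⊆ S.image (DA P)
  · have himg : S.image ν = S.image (DA P) := Finset.eq_of_subset_of_card_le hsub <| by
      rw [Finset.card_image_of_injective S hν, Finset.card_image_of_injective S (DA_injective_s3 P)]
    obtain ⟨m₀, hm₀⟩ := hne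
    obtain ⟨m₂, w, hm₂, hblock⟩ := exists_blocks_of_image_eq hS himg ⟨m₀, (hS m₀).mpr hm₀⟩
    exact ⟨m₂, w, mt (hS m₂).mpr hm₂, hblock⟩
  · obtain ⟨_, hw, hwDA⟩ := Finset.not_subset.mp hsub
    obtain ⟨m₀, hm₀, rfl⟩ := Finset.mem_image.mp hw
    obtain ⟨p, hp⟩ := (DA_bijective_s3 P).2 (ν m₀)
    have hpν : ¬ P.mpref p (ν p) (DA P p) := fun h =>
      hwDA (Finset.mem_image.mpr ⟨p, (hS p).mpr h, hp⟩)
    exact ⟨p, ν m₀, hpν, blocks_of_DA_eq hν ((hS m₀).mp hm₀) hp hpν⟩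

lemma DA_optimal_s3 (hν : Stable P ν) (m : Fin n) : ¬ P.mpref m (ν m) (DA P m) := fun h =>
  have ⟨m₂, w, _, hblock⟩ := exists_blocks_of_mpref_DA hν.1.1 ⟨m, h⟩
  hν.2 m₂ w hblock

lemma not_mpref_DA_updateM (m : Fin n) (e : Fin n ≃ Fin n) :
    ¬ P.mpref m (DA (P.updateM m e) m) (DA P m) := by
  intro h
  obtain ⟨m₂, w, hm₂, hblock⟩ := exists_blocks_of_mpref_DA (DA_injective_s3 _) ⟨m, h⟩
  have hm₂m : m₂ ≠ m := by rintro rfl; exact hm₂ h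
  refine (DA_stable_s3 (P.updateM m e)).2 m₂ w ⟨?_, hblock.2⟩
  simpa only [Profile.mpref, P.updateM_M_of_ne e hm₂m] using hblock.1

lemma Stable.updateM {μ : Fin n → Fin n} (hμ : Stable P μ) {m : Fin n} {e : Fin n ≃ Fin n}
    (h : Above e (μ m) ⊆ Above (P.M m) (μ m)) : Stable (P.updateM m e) μ := by
  refine ⟨hμ.1, fun m' w ⟨hpref, hw⟩ => hμ.2 m' w ⟨?_, hw⟩⟩
  rcases eq_or_ne m' m with rfl | hm'
  · have hw : e.symm w < e.symm (μ m') := by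
      simpa only [Profile.mpref, P.updateM_M_self] using hpref
    exact h hw
  · simpa only [Profile.mpref, P.updateM_M_of_ne e hm'] using hpref

end Blocking

theorem pushDown_men_weakly_better_general (n : ℕ) (P : Profile n) (m : Fin n)
    (Y : Set (Fin n))
    (e' : Fin n ≃ Fin n) (hpd : PushDown P m Y e') :
    DA (P.updateM m e') m = DA P m ∧
    ∀ m' : Fin n,
      (P.M m').symm (DA (P.updateM m e') m') ≤ (P.M m').symm (DA P m') := by
  have habove : Above e' (DA P m) ⊆ Above (P.M m) (DA P m) := by
    rw [hpd, Set.union_empty]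
    exact Set.sdiff_subset
  have hopt := DA_optimal_s3 ((DA_stable_s3 P).updateM habove)
  have hm : DA (P.updateM m e') m = DA P m := by
    by_contra hne
    refine not_mpref_DA_updateM m e' (habove ?_)
    have := hopt m
    simp only [Profile.mpref, P.updateM_M_self] at this
    exact lt_of_le_of_ne (not_lt.mp this) fun h => hne (e'.symm.injective h)
  refine ⟨hm, fun m' => ?_⟩
  rcases eq_or_ne m' m with rfl | hm'
  · rw [hm]
  · simpa only [Profile.mpref, P.updateM_M_of_ne e' hm', not_lt] using hopt m'

/-- Pushing down a set `Y` of women ranked above `m`'s DA partner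
makes every man weakly better off, and `m` keeps the same partner. -/
theorem pushDown_men_weakly_better (n : ℕ) (P : Profile n) (m : Fin n)
    (Y : Set (Fin n)) (hY : Y ⊆ Above (P.M m) (DA P m))
    (e' : Fin n ≃ Fin n) (hpd : PushDown P m Y e') :
    DA (P.updateM m e') m = DA P m ∧
    ∀ m' : Fin n,
      (P.M m').symm (DA (P.updateM m e') m') ≤ (P.M m').symm (DA P m') :=
  pushDown_men_weakly_better_general n P m Y e' hpd
end

section
/- If a fixed man m pushes down a subset X of women ranked above his DA partner, then every woman is weakly worse off in the resulting DA matching: μ(w) ≽_w μ'(w) for all women w. -/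
namespace GSAux

variable {n : ℕ}

/-- The invariant maintained by the Gale–Shapley algorithm. -/
structure Inv (P : Profile n) (s : GSState n) : Prop where
  bound : ∀ m, s.next m ≤ n
  matched_rank : ∀ w m, s.wmatch w = some m → ((P.M m).symm w : ℕ) < s.next m
  proposed : ∀ m (k : Fin n), (k : ℕ) < s.next m →
    ∃ m', s.wmatch (P.M m k) = some m' ∧
      (P.W (P.M m k)).symm m' ≤ (P.W (P.M m k)).symm m
  inj : ∀ w w' m, s.wmatch w = some m → s.wmatch w' = some m → w = w'
  opt : ∀ ν, Stable P ν → ∀ m (k : Fin n), (k : ℕ) < s.next m →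
    s.wmatch (P.M m k) = some m ∨ ν m ≠ P.M m k

lemma notBlocked {P : Profile n} {s : GSState n} (inv : Inv P s)
    {ν : Fin n → Fin n} (hν : Stable P ν) {a b w : Fin n}
    (hrank : ∀ u : Fin n, (P.M a).symm u < (P.M a).symm w → ((P.M a).symm u : ℕ) < s.next a)
    (hnm : ∀ u : Fin n, (P.M a).symm u < (P.M a).symm w → s.wmatch u ≠ some a)
    (hb : ν b = w) (hba : b ≠ a)
    (hw : (P.W w).symm a < (P.W w).symm b) : False := by
  have hinj := hν.1.injective
  have hνa : ν a ≠ w := by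
    intro hh
    exact hba (hinj (hb.trans hh.symm))
  have h1 : ¬ (P.M a).symm (ν a) < (P.M a).symm w := by
    intro hlt
    rcases inv.opt ν hν a ((P.M a).symm (ν a)) (hrank _ hlt) with h | h
    · exact hnm _ hlt (by simpa using h)
    · simp at h
  have h2 : (P.M a).symm w < (P.M a).symm (ν a) := by
    rcases lt_trichotomy ((P.M a).symm w) ((P.M a).symm (ν a)) with h | h | h
    · exact h
    · exact absurd ((P.M a).symm.injective h).symm hνa
    · exact absurd h h1
  exact hν.2 a w ⟨h2, b, hb, hw⟩

lemma Inv.init (P : Profile n) : Inv P (GSinit n) := by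
  constructor <;> intros <;> simp_all [GSinit]

end GSAux

namespace GSAux
variable {n : ℕ}

lemma rank_lt_next {s : GSState n} {mm m0 : Fin n} {k : Fin n}
    (hnew : ¬(mm = m0 ∧ (k : ℕ) = s.next m0))
    (hk : (k : ℕ) < Function.update s.next m0 (s.next m0 + 1) mm) :
    (k : ℕ) < s.next mm := by
  rcases eq_or_ne mm m0 with heq | h
  · subst heq
    rw [Function.update_self] at hk
    rcases Nat.lt_succ_iff_lt_or_eq.mp hk with h | h
    · exact h
    · exact absurd ⟨rfl, h⟩ hnew
  · rwa [Function.update_of_ne h] at hk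

lemma Inv.newmatch {P : Profile n} {s : GSState n} (inv : Inv P s)
    (m0 : Fin n) (hlt : s.next m0 < n) (hun : ∀ w, s.wmatch w ≠ some m0)
    (hold : ∀ m', s.wmatch (P.M m0 ⟨s.next m0, hlt⟩) = some m' →
      (P.W (P.M m0 ⟨s.next m0, hlt⟩)).symm m0 < (P.W (P.M m0 ⟨s.next m0, hlt⟩)).symm m')
    (props' : List (Fin n × Fin n)) :
    Inv P ⟨Function.update s.next m0 (s.next m0 + 1),
           Function.update s.wmatch (P.M m0 ⟨s.next m0, hlt⟩) (some m0), props'⟩ := by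
  set w0 : Fin n := P.M m0 ⟨s.next m0, hlt⟩ with hw0def
  have hrank0 : ((P.M m0).symm w0 : ℕ) = s.next m0 := by
    rw [hw0def, Equiv.symm_apply_apply]
  have hle : ∀ m, s.next m ≤ Function.update s.next m0 (s.next m0 + 1) m := by
    intro m
    rcases eq_or_ne m m0 with rfl | h
    · simp
    · simp [Function.update_of_ne h]
  constructor
  · -- bound
    intro m
    dsimp only
    rcases eq_or_ne m m0 with rfl | h
    · simpa using hlt
    · simp [Function.update_of_ne h, inv.bound m]
  · -- matched_rank
    intro w mm hm
    dsimp only at hm ⊢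
    rcases eq_or_ne w w0 with rfl | hw
    · rw [Function.update_self] at hm
      cases hm
      rw [hrank0]
      simp
    · rw [Function.update_of_ne hw] at hm
      exact lt_of_lt_of_le (inv.matched_rank w mm hm) (hle mm)
  · -- proposed
    intro mm k hk
    dsimp only at hk ⊢
    by_cases hnew : mm = m0 ∧ (k : ℕ) = s.next m0
    · obtain ⟨rfl, hkeq⟩ := hnew
      have hkw : P.M mm k = w0 := by
        rw [hw0def]
        exact congrArg _ (Fin.ext (by simpa using hkeq))
      rw [hkw, Function.update_self]
      exact ⟨mm, rfl, le_refl _⟩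
    · have hk' : (k : ℕ) < s.next mm := rank_lt_next hnew hk
      obtain ⟨m', hm', hpref⟩ := inv.proposed mm k hk'
      rcases eq_or_ne (P.M mm k) w0 with heq | hne
      · refine ⟨m0, by rw [heq, Function.update_self], ?_⟩
        have := hold m' (by rwa [heq] at hm')
        rw [heq] at hpref ⊢
        exact le_of_lt (lt_of_lt_of_le this hpref)
      · exact ⟨m', by rwa [Function.update_of_ne hne], hpref⟩
  · -- inj
    intro w w' mm h1 h2
    dsimp only at h1 h2
    rcases eq_or_ne w w0 with rfl | hw
    · rcases eq_or_ne w' w0 with rfl | hw'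
      · rfl
      · rw [Function.update_self] at h1
        cases h1
        rw [Function.update_of_ne hw'] at h2
        exact absurd h2 (hun w')
    · rcases eq_or_ne w' w0 with rfl | hw'
      · rw [Function.update_self] at h2
        cases h2
        rw [Function.update_of_ne hw] at h1
        exact absurd h1 (hun w)
      · rw [Function.update_of_ne hw] at h1
        rw [Function.update_of_ne hw'] at h2
        exact inv.inj w w' mm h1 h2
  · -- opt
    intro ν hν mm k hk
    dsimp only at hk ⊢
    by_cases hnew : mm = m0 ∧ (k : ℕ) = s.next m0
    · obtain ⟨rfl, hkeq⟩ := hnew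
      have hkw : P.M mm k = w0 := by
        rw [hw0def]
        exact congrArg _ (Fin.ext (by simpa using hkeq))
      rw [hkw, Function.update_self]
      exact Or.inl rfl
    · have hk' : (k : ℕ) < s.next mm := rank_lt_next hnew hk
      rcases inv.opt ν hν mm k hk' with h | h
      · rcases eq_or_ne (P.M mm k) w0 with heq | hne
        · right
          intro hcontra
          have hmw0 : s.wmatch w0 = some mm := by rwa [heq] at h
          have hpr : (P.W w0).symm m0 < (P.W w0).symm mm := hold mm hmw0
          have hmm0 : mm ≠ m0 := by
            intro hh; rw [hh] at hmw0; exact hun w0 hmw0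
          refine notBlocked inv hν (a := m0) (b := mm) (w := w0) ?_ ?_ ?_ hmm0 hpr
          · intro u hu
            have h2 : ((P.M m0).symm u : ℕ) < ((P.M m0).symm w0 : ℕ) := hu
            rwa [hrank0] at h2
          · intro u _ hu
            exact hun u hu
          · rw [hcontra, heq]
        · exact Or.inl (by rw [Function.update_of_ne hne]; exact h)
      · exact Or.inr h

lemma Inv.keep {P : Profile n} {s : GSState n} (inv : Inv P s)
    (m0 : Fin n) (hlt : s.next m0 < n) (hun : ∀ w, s.wmatch w ≠ some m0)
    (m' : Fin n) (hm : s.wmatch (P.M m0 ⟨s.next m0, hlt⟩) = some m')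
    (hpref : (P.W (P.M m0 ⟨s.next m0, hlt⟩)).symm m' ≤ (P.W (P.M m0 ⟨s.next m0, hlt⟩)).symm m0)
    (props' : List (Fin n × Fin n)) :
    Inv P ⟨Function.update s.next m0 (s.next m0 + 1), s.wmatch, props'⟩ := by
  set w0 : Fin n := P.M m0 ⟨s.next m0, hlt⟩ with hw0def
  have hle : ∀ m, s.next m ≤ Function.update s.next m0 (s.next m0 + 1) m := by
    intro m
    rcases eq_or_ne m m0 with rfl | h
    · simp
    · simp [Function.update_of_ne h]
  have hm'ne : m' ≠ m0 := by
    intro hh; rw [hh] at hm; exact hun w0 hm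
  have hprefs : (P.W w0).symm m' < (P.W w0).symm m0 :=
    lt_of_le_of_ne hpref (fun hh => hm'ne ((P.W w0).symm.injective hh))
  constructor
  · intro m
    dsimp only
    rcases eq_or_ne m m0 with rfl | h
    · simpa using hlt
    · simp [Function.update_of_ne h, inv.bound m]
  · intro w mm hmm
    dsimp only at hmm ⊢
    exact lt_of_lt_of_le (inv.matched_rank w mm hmm) (hle mm)
  · intro mm k hk
    dsimp only at hk ⊢
    by_cases hnew : mm = m0 ∧ (k : ℕ) = s.next m0
    · obtain ⟨rfl, hkeq⟩ := hnew
      have hkw : P.M mm k = w0 := by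
        rw [hw0def]
        exact congrArg _ (Fin.ext (by simpa using hkeq))
      rw [hkw]
      exact ⟨m', hm, hpref⟩
    · exact inv.proposed mm k (rank_lt_next hnew hk)
  · intro w w' mm h1 h2
    exact inv.inj w w' mm h1 h2
  · intro ν hν mm k hk
    dsimp only at hk ⊢
    by_cases hnew : mm = m0 ∧ (k : ℕ) = s.next m0
    · obtain ⟨rfl, hkeq⟩ := hnew
      have hkw : P.M mm k = w0 := by
        rw [hw0def]
        exact congrArg _ (Fin.ext (by simpa using hkeq))
      rw [hkw]
      right
      intro hcontra
      have hrw0 : ((P.M m').symm w0 : ℕ) < s.next m' := inv.matched_rank w0 m' hm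
      refine notBlocked inv hν (a := m') (b := mm) (w := w0) ?_ ?_ hcontra
        (Ne.symm hm'ne) hprefs
      · intro u hu
        exact lt_trans (by exact_mod_cast hu) hrw0
      · intro u hu hmu
        have heq := inv.inj u w0 m' hmu hm
        rw [heq] at hu
        exact lt_irrefl _ hu
    · exact inv.opt ν hν mm k (rank_lt_next hnew hk)

end GSAux

namespace GSAux
variable {n : ℕ}

def Terminal (s : GSState n) : Prop :=
  (List.finRange n).find? (fun m => isUnmatched s m && decide (s.next m < n)) = none

lemma find?_some_cond {s : GSState n} {m0 : Fin n}
    (hf : (List.finRange n).find? (fun m => isUnmatched s m && decide (s.next m < n)) = some m0) :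
    (∀ w, s.wmatch w ≠ some m0) ∧ s.next m0 < n := by
  have h := List.find?_some hf
  rw [Bool.and_eq_true, decide_eq_true_eq] at h
  refine ⟨?_, h.2⟩
  have h1 := h.1
  rw [isUnmatched, decide_eq_true_eq] at h1
  exact h1

lemma Inv.step {P : Profile n} {s : GSState n} (inv : Inv P s) : Inv P (GSstep P s) := by
  rcases hf : (List.finRange n).find? (fun m => isUnmatched s m && decide (s.next m < n))
    with _ | m0
  · simp only [GSstep, hf]
    exact inv
  · obtain ⟨hun, hlt⟩ := find?_some_cond hf
    simp only [GSstep, hf]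
    rw [dif_pos hlt]
    cases hm : s.wmatch (P.M m0 ⟨s.next m0, hlt⟩) with
    | none =>
      exact inv.newmatch m0 hlt hun (fun m' h => absurd h (by simp [hm])) _
    | some m' =>
      dsimp only
      by_cases hpref : (P.W (P.M m0 ⟨s.next m0, hlt⟩)).symm m0 <
          (P.W (P.M m0 ⟨s.next m0, hlt⟩)).symm m'
      · rw [if_pos hpref]
        refine inv.newmatch m0 hlt hun (fun m'' h => ?_) _
        rw [hm] at h
        cases h
        exact hpref
      · rw [if_neg hpref]
        exact inv.keep m0 hlt hun m' hm (le_of_not_gt hpref) _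

lemma Inv.iterate (P : Profile n) (t : ℕ) : Inv P ((GSstep P)^[t] (GSinit n)) := by
  induction t with
  | zero => exact Inv.init P
  | succ t ih =>
    rw [Function.iterate_succ_apply']
    exact ih.step

lemma Inv.run (P : Profile n) : Inv P (GSrun P) := Inv.iterate P _

lemma Terminal.fix {P : Profile n} {s : GSState n} (h : Terminal s) : GSstep P s = s := by
  have h' : (List.finRange n).find? (fun m => isUnmatched s m && decide (s.next m < n)) = none :=
    h
  simp only [GSstep, h']

lemma GSstep_next_of_find {P : Profile n} {s : GSState n} {m0 : Fin n}
    (hf : (List.finRange n).find? (fun m => isUnmatched s m && decide (s.next m < n)) = some m0) :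
    (GSstep P s).next = Function.update s.next m0 (s.next m0 + 1) := by
  obtain ⟨-, hlt⟩ := find?_some_cond hf
  simp only [GSstep, hf]
  rw [dif_pos hlt]
  cases hm : s.wmatch (P.M m0 ⟨s.next m0, hlt⟩) with
  | none => rfl
  | some m' =>
    dsimp only
    by_cases hpref : (P.W (P.M m0 ⟨s.next m0, hlt⟩)).symm m0 <
        (P.W (P.M m0 ⟨s.next m0, hlt⟩)).symm m'
    · rw [if_pos hpref]
    · rw [if_neg hpref]

noncomputable def msum (s : GSState n) : ℕ := ∑ m : Fin n, s.next m

lemma msum_step {P : Profile n} {s : GSState n} (h : ¬ Terminal s) :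
    msum (GSstep P s) = msum s + 1 := by
  rcases hf : (List.finRange n).find? (fun m => isUnmatched s m && decide (s.next m < n))
    with _ | m0
  · exact absurd hf h
  · have hnext := GSstep_next_of_find (P := P) hf
    unfold msum
    rw [hnext, Finset.sum_update_of_mem (Finset.mem_univ m0), ← Finset.erase_eq]
    rw [← Finset.add_sum_erase _ s.next (Finset.mem_univ m0)]
    omega

lemma msum_le {P : Profile n} {s : GSState n} (inv : Inv P s) : msum s ≤ n * n := by
  calc msum s ≤ ∑ _m : Fin n, n := Finset.sum_le_sum (fun m _ => inv.bound m)
  _ = n * n := by simp [Finset.sum_const, Finset.card_univ, mul_comm]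

lemma Terminal.run (P : Profile n) : Terminal (GSrun P) := by
  by_contra hc
  have habs : ∀ t, Terminal ((GSstep P)^[t] (GSinit n)) →
      Terminal ((GSstep P)^[t + 1] (GSinit n)) := by
    intro t ht
    rw [Function.iterate_succ_apply', ht.fix]
    exact ht
  have hmono : ∀ t t', t ≤ t' → Terminal ((GSstep P)^[t] (GSinit n)) →
      Terminal ((GSstep P)^[t'] (GSinit n)) := by
    intro t t' hle ht
    induction t', hle using Nat.le_induction with
    | base => exact ht
    | succ t' h ih => exact habs t' ih
  have hnt : ∀ t, t ≤ n * n + 1 → ¬ Terminal ((GSstep P)^[t] (GSinit n)) := by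
    intro t ht hterm
    exact hc (hmono t (n * n + 1) ht hterm)
  have hms : ∀ t, t ≤ n * n + 1 → t ≤ msum ((GSstep P)^[t] (GSinit n)) := by
    intro t
    induction t with
    | zero => intro _; exact Nat.zero_le _
    | succ t ih =>
      intro ht
      rw [Function.iterate_succ_apply', msum_step (hnt t (by omega))]
      have := ih (by omega)
      omega
  have h1 := hms (n * n + 1) (le_refl _)
  have h2 := msum_le (Inv.iterate P (n * n + 1))
  omega

end GSAux

namespace GSAux
variable {n : ℕ}

lemma Terminal.spec {s : GSState n} (h : Terminal s) (m : Fin n) :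
    (∃ w, s.wmatch w = some m) ∨ n ≤ s.next m := by
  have h' : (List.finRange n).find? (fun m => isUnmatched s m && decide (s.next m < n)) = none :=
    h
  have hm := List.find?_eq_none.mp h' m (List.mem_finRange m)
  rw [Bool.and_eq_true, not_and_or] at hm
  rcases hm with hm | hm
  · left
    rw [isUnmatched] at hm
    simp only [decide_eq_true_eq] at hm
    push_neg at hm
    exact hm
  · right
    simp only [decide_eq_true_eq] at hm
    omega

lemma all_matched {P : Profile n} {s : GSState n} (inv : Inv P s) (ht : Terminal s)
    (m : Fin n) : ∃ w, s.wmatch w = some m := by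
  by_contra hc
  push_neg at hc
  have hnext : n ≤ s.next m := by
    rcases ht.spec m with ⟨w, hw⟩ | h
    · exact absurd hw (hc w)
    · exact h
  have hall : ∀ w : Fin n, ∃ m', s.wmatch w = some m' := by
    intro w
    have hk : (((P.M m).symm w : Fin n) : ℕ) < s.next m :=
      lt_of_lt_of_le (Fin.is_lt _) hnext
    obtain ⟨m', hm', -⟩ := inv.proposed m ((P.M m).symm w) hk
    rw [Equiv.apply_symm_apply] at hm'
    exact ⟨m', hm'⟩
  choose f hf using hall
  have hinj : Function.Injective f := by
    intro w w' hww
    exact inv.inj w w' (f w) (hf w) (hww ▸ hf w')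
  have hsurj : Function.Surjective f := Finite.surjective_of_injective hinj
  obtain ⟨w, hw⟩ := hsurj m
  exact hc w (hw ▸ hf w)

lemma DA_matched (P : Profile n) (m : Fin n) : (GSrun P).wmatch (DA P m) = some m := by
  have hex : ∃ w, (GSrun P).wmatch w = some m := all_matched (Inv.run P) (Terminal.run P) m
  rw [DA, dif_pos hex]
  exact hex.choose_spec

lemma DA_inj (P : Profile n) : Function.Injective (DA P) := by
  intro a b hab
  have h1 := DA_matched P a
  have h2 := DA_matched P b
  rw [hab, h2] at h1
  exact (Option.some_injective _ h1).symm

lemma DA_bij (P : Profile n) : Function.Bijective (DA P) :=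
  Finite.injective_iff_bijective.mp (DA_inj P)

lemma DA_eq_of_wmatch {P : Profile n} {w m : Fin n} (h : (GSrun P).wmatch w = some m) :
    DA P m = w :=
  (Inv.run P).inj _ _ m (DA_matched P m) h

lemma DA_stable (P : Profile n) : Stable P (DA P) := by
  refine ⟨DA_bij P, ?_⟩
  rintro a w ⟨h1, m', hm', h2⟩
  have inv := Inv.run P
  have hma := DA_matched P a
  have hrank : ((P.M a).symm (DA P a) : ℕ) < (GSrun P).next a := inv.matched_rank _ a hma
  have hkw : (((P.M a).symm w : Fin n) : ℕ) < (GSrun P).next a :=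
    lt_trans (by exact_mod_cast h1) hrank
  obtain ⟨m'', hm'', hpref⟩ := inv.proposed a ((P.M a).symm w) hkw
  rw [Equiv.apply_symm_apply] at hm'' hpref
  have hw' : (GSrun P).wmatch w = some m' := by
    rw [← hm']
    exact DA_matched P m'
  rw [hw'] at hm''
  cases hm''
  exact absurd h2 (not_lt.mpr hpref)

lemma DA_optimal {P : Profile n} {ν : Fin n → Fin n} (hν : Stable P ν) (m : Fin n) :
    (P.M m).symm (DA P m) ≤ (P.M m).symm (ν m) := by
  by_contra hc
  rw [not_le] at hc
  have inv := Inv.run P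
  have hrank : ((P.M m).symm (DA P m) : ℕ) < (GSrun P).next m :=
    inv.matched_rank _ m (DA_matched P m)
  have hkw : (((P.M m).symm (ν m) : Fin n) : ℕ) < (GSrun P).next m :=
    lt_trans (by exact_mod_cast hc) hrank
  rcases inv.opt ν hν m ((P.M m).symm (ν m)) hkw with h | h
  · rw [Equiv.apply_symm_apply] at h
    have := DA_eq_of_wmatch h
    rw [this] at hc
    exact lt_irrefl _ hc
  · rw [Equiv.apply_symm_apply] at h
    exact h rfl

lemma DA_pessimal {P : Profile n} {ν : Fin n → Fin n} (hν : Stable P ν)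
    {m₁ m₂ w : Fin n} (h1 : ν m₁ = w) (h2 : DA P m₂ = w) :
    (P.W w).symm m₁ ≤ (P.W w).symm m₂ := by
  by_contra hc
  rw [not_le] at hc
  have hne : m₁ ≠ m₂ := by
    intro hh
    rw [hh] at hc
    exact lt_irrefl _ hc
  have hν2 : ν m₂ ≠ w := by
    intro hh
    exact hne (hν.1.injective (h1.trans hh.symm))
  refine hν.2 m₂ w ⟨?_, m₁, h1, hc⟩
  have hle := DA_optimal hν m₂
  rw [h2] at hle
  exact lt_of_le_of_ne hle (fun hh => hν2 ((P.M m₂).symm.injective hh).symm)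

end GSAux

/-- Pushing down a set `Y` of women ranked above `m`'s DA partner
makes every woman weakly worse off: each woman weakly prefers her old partner. -/
theorem pushDown_women_weakly_worse (n : ℕ) (P : Profile n) (m : Fin n)
    (Y : Set (Fin n)) (hY : Y ⊆ Above (P.M m) (DA P m))
    (e' : Fin n ≃ Fin n) (hpd : PushDown P m Y e') :
    ∀ (w m₁ m₂ : Fin n), DA P m₁ = w → DA (P.updateM m e') m₂ = w →
      (P.W w).symm m₁ ≤ (P.W w).symm m₂ := by
  intro w m₁ m₂ h₁ h₂
  set P' : Profile n := P.updateM m e' with hP'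
  have hW : P'.W = P.W := rfl
  have hMm : P'.M m = e' := by
    rw [hP', Profile.updateM]
    exact Function.update_self m e' P.M
  have hMne : ∀ a, a ≠ m → P'.M a = P.M a := by
    intro a ha
    rw [hP', Profile.updateM]
    exact Function.update_of_ne ha e' P.M
  have habove : Above e' (DA P m) ⊆ Above (P.M m) (DA P m) := by
    rw [hpd]
    intro u hu
    exact (Set.diff_subset hu).elim (fun h => h) (fun h => absurd h (Set.notMem_empty u))
  have hst : Stable P' (DA P) := by
    refine ⟨GSAux.DA_bij P, ?_⟩
    rintro a u ⟨hb1, a', ha', hb2⟩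
    rcases eq_or_ne a m with rfl | hne
    · refine GSAux.DA_stable P |>.2 a u ⟨?_, a', ha', hb2⟩
      have hu : u ∈ Above e' (DA P a) := by
        rw [Profile.mpref, hMm] at hb1
        exact hb1
      exact habove hu
    · refine GSAux.DA_stable P |>.2 a u ⟨?_, a', ha', hb2⟩
      rw [Profile.mpref, hMne a hne] at hb1
      exact hb1
  exact GSAux.DA_pessimal hst h₁ h₂
end

section
/- Suppose man m pushes up a set X of women ranked below his DA partner μ(m) (moving them above μ(m)) and the resulting DA matching μ' still matches m to μ(m) (no regret). Then μ' is stable with respect to the true preference profile; consequently every woman weakly prefers μ' to μ and every man weakly prefers μ to μ'. -/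
namespace GS
variable {n : ℕ} (Q : Profile n)

structure Inv (s : GSState n) : Prop where
  next_le : ∀ m, s.next m ≤ n
  held_rank : ∀ w m, s.wmatch w = some m → ((Q.M m).symm w : ℕ) < s.next m
  held_inj : ∀ w w' m, s.wmatch w = some m → s.wmatch w' = some m → w = w'
  passed : ∀ m (k : Fin n), (k : ℕ) < s.next m → s.wmatch (Q.M m k) ≠ some m →
    ∃ m', s.wmatch (Q.M m k) = some m' ∧
      (Q.W (Q.M m k)).symm m' < (Q.W (Q.M m k)).symm m
  opt : ∀ ν, Stable Q ν → ∀ m (k : Fin n), (k : ℕ) < s.next m → Q.M m k = ν m →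
    s.wmatch (ν m) = some m

lemma inv_init : Inv Q (GSinit n) := by
  constructor <;> intros <;> simp_all [GSinit]
lemma inv_accept (s : GSState n) (hs : Inv Q s) (m : Fin n) (hlt : s.next m < n)
    (w₀ : Fin n) (hw₀ : Q.M m ⟨s.next m, hlt⟩ = w₀)
    (hunm : ∀ w, s.wmatch w ≠ some m)
    (hbeat : ∀ m'', s.wmatch w₀ = some m'' →
      (Q.W w₀).symm m < (Q.W w₀).symm m'')
    (pr : List (Fin n × Fin n)) :
    Inv Q ⟨Function.update s.next m (s.next m + 1),
      Function.update s.wmatch w₀ (some m), pr⟩ := by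
  have hrk : (Q.M m).symm w₀ = ⟨s.next m, hlt⟩ := by
    rw [← hw₀]; exact Equiv.symm_apply_apply _ _
  constructor
  · -- next_le
    intro m₀
    by_cases h : m₀ = m
    · subst h; simp only [Function.update_self]; omega
    · simp only [Function.update_of_ne h]; exact hs.next_le m₀
  · -- held_rank
    intro w m₀ hm₀
    simp only [] at hm₀ ⊢
    by_cases hww : w = w₀
    · subst hww
      simp only [Function.update_self, Option.some.injEq] at hm₀
      subst hm₀
      simp only [hrk, Function.update_self]
      omega
    · simp only [Function.update_of_ne hww] at hm₀
      have := hs.held_rank w m₀ hm₀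
      by_cases h : m₀ = m
      · exact absurd hm₀ (h ▸ hunm w)
      · simpa only [Function.update_of_ne h] using this
  · -- held_inj
    intro w w' m₀ h1 h2
    simp only [] at h1 h2
    by_cases hww : w = w₀ <;> by_cases hww' : w' = w₀
    · rw [hww, hww']
    · rw [hww] at h1
      simp only [Function.update_self, Option.some.injEq] at h1
      simp only [Function.update_of_ne hww'] at h2
      exact absurd h2 (h1 ▸ hunm w')
    · rw [hww'] at h2
      simp only [Function.update_self, Option.some.injEq] at h2
      simp only [Function.update_of_ne hww] at h1
      exact absurd h1 (h2 ▸ hunm w)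
    · simp only [Function.update_of_ne hww] at h1
      simp only [Function.update_of_ne hww'] at h2
      exact hs.held_inj w w' m₀ h1 h2
  · -- passed
    intro m₀ k hk hne
    simp only [] at hk hne ⊢
    by_cases h : m₀ = m
    · subst h
      simp only [Function.update_self] at hk
      by_cases hkk : (k : ℕ) = s.next m₀
      · exfalso
        have hkeq : k = ⟨s.next m₀, hlt⟩ := Fin.ext hkk
        rw [hkeq, hw₀] at hne
        simp only [Function.update_self] at hne
        exact hne rfl
      · have hk' : (k : ℕ) < s.next m₀ := by omega
        have hne' : Q.M m₀ k ≠ w₀ := by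
          intro hc
          rw [← hw₀] at hc
          exact hkk (congrArg Fin.val ((Q.M m₀).injective hc))
        obtain ⟨m', hm', hlt'⟩ := hs.passed m₀ k hk' (hunm _)
        exact ⟨m', by simpa only [Function.update_of_ne hne'] using hm', hlt'⟩
    · simp only [Function.update_of_ne h] at hk
      by_cases hne' : Q.M m₀ k = w₀
      · refine ⟨m, by rw [hne']; simp only [Function.update_self], ?_⟩
        rw [hne']
        by_cases hm₀w : s.wmatch w₀ = some m₀
        · exact hbeat m₀ hm₀w
        · obtain ⟨m'', hm'', hlt''⟩ := hs.passed m₀ k hk (hne' ▸ hm₀w)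
          rw [hne'] at hm'' hlt''
          exact lt_trans (hbeat m'' hm'') hlt''
      · simp only [Function.update_of_ne hne'] at hne ⊢
        exact hs.passed m₀ k hk hne
  · -- opt
    intro ν hν m₀ k hk hkν
    simp only [] at hk ⊢
    have hinj := hν.1.injective
    by_cases h : m₀ = m
    · subst h
      simp only [Function.update_self] at hk
      by_cases hkk : (k : ℕ) = s.next m₀
      · have hkeq : k = ⟨s.next m₀, hlt⟩ := Fin.ext hkk
        rw [hkeq, hw₀] at hkν
        rw [← hkν]
        simp only [Function.update_self]
      · have hk' : (k : ℕ) < s.next m₀ := by omega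
        exact absurd (hs.opt ν hν m₀ k hk' hkν) (hunm _)
    · simp only [Function.update_of_ne h] at hk
      have hold := hs.opt ν hν m₀ k hk hkν
      by_cases hne' : ν m₀ = w₀
      · exfalso
        have hbm₀ : (Q.W w₀).symm m < (Q.W w₀).symm m₀ := hbeat m₀ (hne' ▸ hold)
        have hνm : ν m ≠ w₀ := fun hc => h (hinj (hc.trans hne'.symm)).symm
        have hrank : s.next m ≤ ((Q.M m).symm (ν m) : ℕ) := by
          by_contra hc
          push_neg at hc
          exact hunm _ (hs.opt ν hν m ((Q.M m).symm (ν m)) hc (Equiv.apply_symm_apply _ _))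
        have hmpref : Q.mpref m w₀ (ν m) := by
          unfold Profile.mpref
          rw [hrk]
          have hneq : ((Q.M m).symm (ν m) : ℕ) ≠ s.next m := by
            intro hc
            have h1 : (Q.M m).symm (ν m) = ⟨s.next m, hlt⟩ := Fin.ext hc
            have h2 := congrArg (Q.M m) h1
            rw [Equiv.apply_symm_apply, hw₀] at h2
            exact hνm h2
          exact Fin.mk_lt_of_lt_val (by omega)
        exact hν.2 m w₀ ⟨hmpref, m₀, hne', hbm₀⟩
      · simp only [Function.update_of_ne hne']
        exact hold
lemma inv_reject (s : GSState n) (hs : Inv Q s) (m : Fin n) (hlt : s.next m < n)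
    (w₀ : Fin n) (hw₀ : Q.M m ⟨s.next m, hlt⟩ = w₀)
    (hunm : ∀ w, s.wmatch w ≠ some m)
    (m' : Fin n) (hw : s.wmatch w₀ = some m')
    (hkeep : ¬ (Q.W w₀).symm m < (Q.W w₀).symm m')
    (pr : List (Fin n × Fin n)) :
    Inv Q ⟨Function.update s.next m (s.next m + 1), s.wmatch, pr⟩ := by
  have hrk : (Q.M m).symm w₀ = ⟨s.next m, hlt⟩ := by
    rw [← hw₀]; exact Equiv.symm_apply_apply _ _
  have hm'm : m' ≠ m := fun hc => hunm w₀ (hc ▸ hw)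
  have hm'lt : (Q.W w₀).symm m' < (Q.W w₀).symm m := by
    rcases lt_or_eq_of_le (not_lt.mp hkeep) with h | h
    · exact h
    · exact absurd ((Q.W w₀).symm.injective h) hm'm
  constructor
  · intro m₀
    by_cases h : m₀ = m
    · subst h; simp only [Function.update_self]; omega
    · simp only [Function.update_of_ne h]; exact hs.next_le m₀
  · intro w m₀ hm₀
    simp only [] at hm₀ ⊢
    have := hs.held_rank w m₀ hm₀
    by_cases h : m₀ = m
    · exact absurd hm₀ (h ▸ hunm w)
    · simpa only [Function.update_of_ne h] using this
  · intro w w' m₀ h1 h2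
    exact hs.held_inj w w' m₀ h1 h2
  · intro m₀ k hk hne
    simp only [] at hk hne ⊢
    by_cases h : m₀ = m
    · subst h
      simp only [Function.update_self] at hk
      by_cases hkk : (k : ℕ) = s.next m₀
      · have hkeq : k = ⟨s.next m₀, hlt⟩ := Fin.ext hkk
        rw [hkeq, hw₀]
        exact ⟨m', hw, hm'lt⟩
      · exact hs.passed m₀ k (by omega) hne
    · simp only [Function.update_of_ne h] at hk
      exact hs.passed m₀ k hk hne
  · intro ν hν m₀ k hk hkν
    simp only [] at hk ⊢
    have hinj := hν.1.injective
    by_cases h : m₀ = m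
    · subst h
      simp only [Function.update_self] at hk
      by_cases hkk : (k : ℕ) = s.next m₀
      · exfalso
        -- ν m₀ = w₀; derive a blocking pair (m', w₀) for ν
        have hkeq : k = ⟨s.next m₀, hlt⟩ := Fin.ext hkk
        have hνm : ν m₀ = w₀ := by rw [← hkν, hkeq, hw₀]
        have hνm' : ν m' ≠ w₀ := fun hc => hm'm (hinj (hc.trans hνm.symm))
        have hrkm' : ((Q.M m').symm w₀ : ℕ) < s.next m' := hs.held_rank w₀ m' hw
        have hmpref : Q.mpref m' w₀ (ν m') := by
          unfold Profile.mpref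
          by_contra hc
          push_neg at hc
          have hstrict : (Q.M m').symm (ν m') < (Q.M m').symm w₀ := by
            rcases lt_or_eq_of_le hc with h' | h'
            · exact h'
            · exact absurd ((Q.M m').symm.injective h') hνm'
          have hk' : ((Q.M m').symm (ν m') : ℕ) < s.next m' := lt_trans hstrict hrkm'
          have := hs.opt ν hν m' ((Q.M m').symm (ν m')) hk' (Equiv.apply_symm_apply _ _)
          exact hνm' (hs.held_inj _ _ m' this hw ▸ rfl)
        exact hν.2 m' w₀ ⟨hmpref, m₀, hνm, hm'lt⟩
      · exact absurd (hs.opt ν hν m₀ k (by omega) hkν) (hunm _)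
    · simp only [Function.update_of_ne h] at hk
      exact hs.opt ν hν m₀ k hk hkν
/-- The algorithm has terminated. -/
def Done (s : GSState n) : Prop :=
  (List.finRange n).find? (fun m => isUnmatched s m && decide (s.next m < n)) = none

lemma gsstep_done {s : GSState n} (h : Done s) : GSstep Q s = s := by
  unfold GSstep
  rw [h]

lemma inv_step (s : GSState n) (hs : Inv Q s) : Inv Q (GSstep Q s) := by
  unfold GSstep
  split
  · exact hs
  · next m hfind =>
    have hp := List.find?_some hfind
    simp only [Bool.and_eq_true, decide_eq_true_eq, isUnmatched] at hp
    obtain ⟨hunm, hlt⟩ := hp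
    rw [dif_pos hlt]
    cases hw : s.wmatch (Q.M m ⟨s.next m, hlt⟩) with
    | none =>
      simp only [hw]
      exact inv_accept Q s hs m hlt _ rfl hunm
        (fun m'' hm'' => absurd (hw ▸ hm'') (by simp)) _
    | some m' =>
      simp only [hw]
      by_cases hcmp : (Q.W (Q.M m ⟨s.next m, hlt⟩)).symm m <
          (Q.W (Q.M m ⟨s.next m, hlt⟩)).symm m'
      · rw [if_pos hcmp]
        refine inv_accept Q s hs m hlt _ rfl hunm (fun m'' hm'' => ?_) _
        rw [hw, Option.some.injEq] at hm''
        exact hm'' ▸ hcmp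
      · rw [if_neg hcmp]
        exact inv_reject Q s hs m hlt _ rfl hunm m' hw hcmp _

/-- total progress measure -/
def sumNext (s : GSState n) : ℕ := ∑ m, s.next m

lemma sumNext_le (s : GSState n) (hs : Inv Q s) : sumNext s ≤ n * n := by
  calc sumNext s ≤ ∑ _m : Fin n, n := Finset.sum_le_sum fun m _ => hs.next_le m
  _ = n * n := by simp [Finset.sum_const, Finset.card_univ]

lemma sumNext_step (s : GSState n) (h : ¬ Done s) :
    sumNext (GSstep Q s) = sumNext s + 1 := by
  unfold GSstep
  split
  · next hfind => exact absurd hfind h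
  · next m hfind =>
    have hp := List.find?_some hfind
    simp only [Bool.and_eq_true, decide_eq_true_eq, isUnmatched] at hp
    obtain ⟨hunm, hlt⟩ := hp
    rw [dif_pos hlt]
    have key : ∀ wm pr, sumNext (⟨Function.update s.next m (s.next m + 1), wm, pr⟩ : GSState n)
        = sumNext s + 1 := by
      intro wm pr
      unfold sumNext
      simp only []
      rw [Finset.sum_update_of_mem (Finset.mem_univ m)]
      rw [Finset.sum_eq_add_sum_sdiff_singleton_of_mem (Finset.mem_univ m) s.next]
      omega
    cases hw : s.wmatch (Q.M m ⟨s.next m, hlt⟩) with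
    | none => simp only [hw]; exact key _ _
    | some m' =>
      simp only [hw]
      by_cases hcmp : (Q.W (Q.M m ⟨s.next m, hlt⟩)).symm m <
          (Q.W (Q.M m ⟨s.next m, hlt⟩)).symm m'
      · rw [if_pos hcmp]; exact key _ _
      · rw [if_neg hcmp]; exact key _ _

lemma inv_iter (k : ℕ) : Inv Q ((GSstep Q)^[k] (GSinit n)) := by
  induction k with
  | zero => exact inv_init Q
  | succ k ih => rw [Function.iterate_succ_apply']; exact inv_step Q _ ih

lemma done_run : Done (GSrun Q) := by
  have key : ∀ j : ℕ, Done ((GSstep Q)^[j] (GSinit n)) ∨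
      sumNext ((GSstep Q)^[j] (GSinit n)) = j := by
    intro j
    induction j with
    | zero => right; simp [sumNext, GSinit]
    | succ j ih =>
      by_cases hd : Done ((GSstep Q)^[j] (GSinit n))
      · left
        rw [Function.iterate_succ_apply', gsstep_done Q hd]
        exact hd
      · rcases ih with h | h
        · exact absurd h hd
        · right
          rw [Function.iterate_succ_apply', sumNext_step Q _ hd, h]
  rcases key (n * n + 1) with h | h
  · exact h
  · exfalso
    have hle := sumNext_le Q _ (inv_iter Q (n * n + 1))
    omega

lemma inv_run : Inv Q (GSrun Q) := inv_iter Q _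

lemma run_terminal : ∀ m : Fin n, (∃ w, (GSrun Q).wmatch w = some m) ∨ (GSrun Q).next m = n := by
  intro m
  have h := done_run Q
  unfold Done at h
  have := List.find?_eq_none.mp h m (List.mem_finRange m)
  simp only [Bool.and_eq_true, decide_eq_true_eq, isUnmatched, not_and] at this
  by_cases hm : ∃ w, (GSrun Q).wmatch w = some m
  · exact Or.inl hm
  · right
    push_neg at hm
    have := this hm
    have h2 := (inv_run Q).next_le m
    omega

lemma all_matched : ∀ m : Fin n, ∃ w, (GSrun Q).wmatch w = some m := by
  intro m
  by_contra hm
  push_neg at hm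
  rcases run_terminal Q m with h | h
  · obtain ⟨w, hw⟩ := h; exact hm w hw
  · -- every woman is matched
    have hall : ∀ w : Fin n, ∃ m', (GSrun Q).wmatch w = some m' := by
      intro w
      have hk : (((Q.M m).symm w : Fin n) : ℕ) < (GSrun Q).next m := by
        rw [h]; exact ((Q.M m).symm w).isLt
      obtain ⟨m', hm', _⟩ := (inv_run Q).passed m ((Q.M m).symm w) hk
        (by rw [Equiv.apply_symm_apply]; exact hm w)
      rw [Equiv.apply_symm_apply] at hm'
      exact ⟨m', hm'⟩
    set f : Fin n → Fin n := fun w => (hall w).choose with hf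
    have hfs : ∀ w, (GSrun Q).wmatch w = some (f w) := fun w => (hall w).choose_spec
    have hinj : Function.Injective f := by
      intro w w' hww
      exact (inv_run Q).held_inj w w' (f w) (hfs w) (hww ▸ hfs w')
    obtain ⟨w, hw⟩ := Finite.injective_iff_surjective.mp hinj m
    exact hm w (hw ▸ hfs w)
lemma DA_spec (m : Fin n) : (GSrun Q).wmatch (DA Q m) = some m := by
  unfold DA
  rw [dif_pos (all_matched Q m)]
  exact (all_matched Q m).choose_spec

lemma wmatch_eq_iff {w m' : Fin n} : (GSrun Q).wmatch w = some m' ↔ DA Q m' = w := by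
  constructor
  · intro h
    exact ((inv_run Q).held_inj w (DA Q m') m' h (DA_spec Q m')).symm
  · intro h
    rw [← h]
    exact DA_spec Q m'

lemma DA_inj : Function.Injective (DA Q) := by
  intro m m' h
  have h1 := DA_spec Q m
  rw [h, DA_spec Q m'] at h1
  exact (Option.some.injEq _ _ ▸ h1).symm

lemma DA_bij : Function.Bijective (DA Q) := Finite.injective_iff_bijective.mp (DA_inj Q)

lemma DA_rank (m : Fin n) : ((Q.M m).symm (DA Q m) : ℕ) < (GSrun Q).next m :=
  (inv_run Q).held_rank _ m (DA_spec Q m)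

theorem DA_stable : Stable Q (DA Q) := by
  refine ⟨DA_bij Q, fun m w hblock => ?_⟩
  obtain ⟨hpref, m', hm', hwp⟩ := hblock
  have hwm : (GSrun Q).wmatch w = some m' := (wmatch_eq_iff Q).mpr hm'
  have hk : (((Q.M m).symm w : Fin n) : ℕ) < (GSrun Q).next m :=
    lt_trans (by exact_mod_cast hpref) (DA_rank Q m)
  have hne : (GSrun Q).wmatch (Q.M m ((Q.M m).symm w)) ≠ some m := by
    rw [Equiv.apply_symm_apply]
    intro hc
    have : w = DA Q m := ((wmatch_eq_iff Q).mp hc).symm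
    rw [this] at hpref
    exact lt_irrefl _ hpref
  obtain ⟨m'', hm'', hlt''⟩ := (inv_run Q).passed m ((Q.M m).symm w) hk hne
  rw [Equiv.apply_symm_apply] at hm'' hlt''
  rw [hwm, Option.some.injEq] at hm''
  subst hm''
  exact absurd hwp (not_lt.mpr (le_of_lt hlt''))

theorem DA_optimal (ν : Fin n → Fin n) (hν : Stable Q ν) (m : Fin n) :
    (Q.M m).symm (DA Q m) ≤ (Q.M m).symm (ν m) := by
  by_contra hc
  push_neg at hc
  have hk : (((Q.M m).symm (ν m) : Fin n) : ℕ) < (GSrun Q).next m :=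
    lt_trans (by exact_mod_cast hc) (DA_rank Q m)
  have := (inv_run Q).opt ν hν m ((Q.M m).symm (ν m)) hk (Equiv.apply_symm_apply _ _)
  have hda : DA Q m = ν m := (wmatch_eq_iff Q).mp this
  rw [hda] at hc
  exact lt_irrefl _ hc
end GS

/-- A no-regret push-up yields a matching that is stable with respect
to the true profile; consequently every woman weakly prefers the new matching and
every man weakly prefers the old one. -/
theorem noRegret_pushUp_stable (n : ℕ) (P : Profile n) (m : Fin n)
    (X : Set (Fin n)) (hX : X ⊆ Below (P.M m) (DA P m))
    (e' : Fin n ≃ Fin n) (hpu : PushUp P m X e')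
    (hnr : DA (P.updateM m e') m = DA P m) :
    Stable P (DA (P.updateM m e')) ∧
    (∀ (w m₁ m₂ : Fin n), DA (P.updateM m e') m₁ = w → DA P m₂ = w →
      (P.W w).symm m₁ ≤ (P.W w).symm m₂) ∧
    (∀ m' : Fin n,
      (P.M m').symm (DA P m') ≤ (P.M m').symm (DA (P.updateM m e') m')) := by
  set P' := P.updateM m e' with hP'
  have hM : P'.M m = e' := by
    simp [hP', Profile.updateM]
  have hMne : ∀ m₀, m₀ ≠ m → P'.M m₀ = P.M m₀ := by
    intro m₀ h
    simp [hP', Profile.updateM, Function.update_of_ne h]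
  have hW : P'.W = P.W := rfl
  unfold PushUp PushUpDown at hpu
  have habove : ∀ w, (P.M m).symm w < (P.M m).symm (DA P m) →
      e'.symm w < e'.symm (DA P m) := by
    intro w hw
    have hmem : w ∈ Above e' (DA P m) := by
      rw [hpu, Set.diff_empty]
      exact Or.inl hw
    exact hmem
  have hstab' := GS.DA_stable P'
  have part1 : Stable P (DA P') := by
    refine ⟨hstab'.1, fun m₀ w₀ hb => ?_⟩
    obtain ⟨hpref, m₁, hm₁, hwp⟩ := hb
    refine hstab'.2 m₀ w₀ ⟨?_, m₁, hm₁, hwp⟩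
    by_cases h : m₀ = m
    · subst h
      show (P'.M m₀).symm w₀ < (P'.M m₀).symm (DA P' m₀)
      rw [hM, hnr]
      rw [hnr] at hpref
      exact habove w₀ hpref
    · show (P'.M m₀).symm w₀ < (P'.M m₀).symm (DA P' m₀)
      rw [hMne m₀ h]
      exact hpref
  have part3 : ∀ m'' : Fin n, (P.M m'').symm (DA P m'') ≤ (P.M m'').symm (DA P' m'') :=
    fun m'' => GS.DA_optimal P (DA P') part1 m''
  refine ⟨part1, ?_, part3⟩
  intro w m₁ m₂ h1 h2
  by_contra hc
  push_neg at hc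
  have hne12 : m₁ ≠ m₂ := fun h => by subst h; exact lt_irrefl _ hc
  have hμ'ne : DA P' m₂ ≠ w := fun h => hne12 (hstab'.1.injective (h1.trans h.symm))
  have hmpref : P.mpref m₂ w (DA P' m₂) := by
    unfold Profile.mpref
    have hle := part3 m₂
    rw [h2] at hle
    refine lt_of_le_of_ne hle fun h => hμ'ne ?_
    exact ((P.M m₂).symm.injective h.symm)
  exact part1.2 m₂ w ⟨hmpref, m₁, h1, hc⟩
end
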